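/- arXiv:1202.3677 — 2 statements merged into one kernel-verified Lean document; each statement's English description precedes it below -/
import Mathlib

section
/- Let α, β be closed smooth 1-forms on B. Then O'Neill's formula holds in the covariant form: g_B( R^B(α♯,β♯)β♯, α♯ ) ∘ p = g_E( R^E( (p*α)♯, (p*β)♯ )(p*β)♯, (p*α)♯ ) + (3/4) ‖ [ (p*α)♯, (p*β)♯ ]^{ver} ‖²_{g_E}, where R^E and R^B are the Riemann curvature tensors of (E,g_E) and (B,g_B) and X^{ver} denotes the vertical component of a vector field X on E. -/
/-!
Local-coordinate (chart) model of a Riemannian manifold: points are elements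
of `ℝⁿ`, vector fields and 1-forms are given by their component functions on
an open set `U`, and the metric by its matrix of components.
-/

noncomputable section

namespace RG

/-- Points of the chart. -/
abbrev Pt (n : ℕ) : Type := Fin n → ℝ
/-- Vector fields, by components. -/
abbrev VF (n : ℕ) : Type := Pt n → Fin n → ℝ
/-- 1-forms, by components. -/
abbrev OneForm (n : ℕ) : Type := Pt n → Fin n → ℝ
/-- Metric tensors, by components. -/
abbrev Met (n : ℕ) : Type := Pt n → Matrix (Fin n) (Fin n) ℝ

variable {n : ℕ}

/-- Partial derivative `∂ₛ f`. -/
def pd (s : Fin n) (f : Pt n → ℝ) : Pt n → ℝ := fun x => fderiv ℝ f x (Pi.single s 1)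

/-- Directional derivative `X f` of a function along a vector field. -/
def dder (X : VF n) (f : Pt n → ℝ) : Pt n → ℝ := fun x => fderiv ℝ f x (X x)

/-- Lie bracket `[X, Y]` of vector fields. -/
def bracket (X Y : VF n) : VF n :=
  fun x k => fderiv ℝ (fun y => Y y k) x (X x) - fderiv ℝ (fun y => X y k) x (Y x)

/-- The inverse (co-)metric `g⁻¹`. -/
def ginv (g : Met n) : Met n := fun x => (g x)⁻¹

/-- Pairing `α(X)` of a 1-form with a vector field. -/
def pairF (α : OneForm n) (X : VF n) : Pt n → ℝ := fun x => ∑ i, α x i * X x i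

/-- Metric inner product `g(X,Y)` of vector fields. -/
def gV (g : Met n) (X Y : VF n) : Pt n → ℝ := fun x => ∑ i, ∑ j, g x i j * X x i * Y x j

/-- Co-metric inner product `g⁻¹(α,β)` of 1-forms. -/
def gF (g : Met n) (α β : OneForm n) : Pt n → ℝ :=
  fun x => ∑ i, ∑ j, ginv g x i j * α x i * β x j

/-- Raising indices: `α♯ = g⁻¹ α`. -/
def sharp (g : Met n) (α : OneForm n) : VF n := fun x k => ∑ i, ginv g x i k * α x i

/-- Lowering indices: `X♭ = g X`. -/
def flat (g : Met n) (X : VF n) : OneForm n := fun x k => ∑ i, g x i k * X x i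

/-- Differential `df` of a function, as a 1-form. -/
def dF (f : Pt n → ℝ) : OneForm n := fun x i => pd i f x

/-- Exterior derivative of a 1-form, evaluated on two vector fields:
`dα(X,Y) = Σ (∂ᵢα_j − ∂_jαᵢ) Xⁱ Y^j`. -/
def dOne (α : OneForm n) (X Y : VF n) : Pt n → ℝ :=
  fun x => ∑ i, ∑ j, (pd i (fun y => α y j) x - pd j (fun y => α y i) x) * X x i * Y x j

/-- Christoffel symbols `Γ^k_{ij}` of the Levi-Civita connection. -/
def chr (g : Met n) (k i j : Fin n) : Pt n → ℝ :=
  fun x => (1/2) * ∑ l, ginv g x k l *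
    (pd i (fun y => g y j l) x + pd j (fun y => g y i l) x - pd l (fun y => g y i j) x)

/-- Levi-Civita covariant derivative `∇_X Y` of a vector field. -/
def covV (g : Met n) (X Y : VF n) : VF n :=
  fun x k => fderiv ℝ (fun y => Y y k) x (X x) + ∑ i, ∑ j, chr g k i j x * X x i * Y x j

/-- Levi-Civita covariant derivative `∇_X α` of a 1-form, characterized by
`(∇_X α)(Y) = X(α(Y)) − α(∇_X Y)`. -/
def covF (g : Met n) (X : VF n) (α : OneForm n) : OneForm n :=
  fun x j => fderiv ℝ (fun y => α y j) x (X x) - ∑ i, ∑ k, X x i * chr g k i j x * α x k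

/-- Riemann curvature tensor `R(X,Y)Z = ∇_X∇_Y Z − ∇_Y∇_X Z − ∇_{[X,Y]}Z`. -/
def Rcurv (g : Met n) (X Y Z : VF n) : VF n :=
  covV g X (covV g Y Z) - covV g Y (covV g X Z) - covV g (bracket X Y) Z

/-- Lie derivative of a 1-form along a vector field. -/
def lieF (X : VF n) (α : OneForm n) : OneForm n :=
  fun x i => fderiv ℝ (fun y => α y i) x (X x) + ∑ s, α x s * pd i (fun y => X y s) x

/-- Lie derivative of a contravariant 2-tensor (such as the co-metric `g⁻¹`). -/
def lieCo (X : VF n) (G : Met n) : Met n :=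
  fun x => Matrix.of fun i j =>
    fderiv ℝ (fun y => G y i j) x (X x)
      - ∑ s, G x s j * pd s (fun y => X y i) x
      - ∑ s, G x i s * pd s (fun y => X y j) x

/-- Evaluation of a contravariant 2-tensor on a pair of 1-forms. -/
def evCo (G : Met n) (α β : OneForm n) : Pt n → ℝ :=
  fun x => ∑ i, ∑ j, G x i j * α x i * β x j

/-- Smoothness of (the components of) a 1-form or vector field on `U`. -/
def SmoothSec (U : Set (Pt n)) (ω : Pt n → Fin n → ℝ) : Prop :=
  ∀ i, ContDiffOn ℝ (⊤ : ℕ∞) (fun y => ω y i) U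

/-- Smoothness of the metric components on `U`. -/
def SmoothMet (U : Set (Pt n)) (g : Met n) : Prop :=
  ∀ i j, ContDiffOn ℝ (⊤ : ℕ∞) (fun y => g y i j) U

/-- `g` is a smooth Riemannian metric on `U`. -/
def IsRiemannOn (U : Set (Pt n)) (g : Met n) : Prop :=
  SmoothMet U g ∧ ∀ x ∈ U, (g x).IsSymm ∧ (g x).PosDef

/-- A 1-form is closed on `U`. -/
def IsClosedOn (U : Set (Pt n)) (α : OneForm n) : Prop :=
  ∀ x ∈ U, ∀ i j, pd i (fun y => α y j) x = pd j (fun y => α y i) x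

end RG

open RG

namespace RG

variable {m nb : ℕ}

/-- Pullback `p*α` of a 1-form along a map `p`. -/
def pbF (p : Pt m → Pt nb) (α : OneForm nb) : OneForm m :=
  fun x i => ∑ j, α (p x) j * fderiv ℝ p x (Pi.single i 1) j

/-- Pullback `(T_x p)* ξ` of a covector `ξ` at `p x` to a covector at `x`. -/
def pbCov (p : Pt m → Pt nb) (x : Pt m) (ξ : Fin nb → ℝ) : Fin m → ℝ :=
  fun i => ∑ j, ξ j * fderiv ℝ p x (Pi.single i 1) j

/-- Inner product of tangent vectors at a point, w.r.t. the metric `g`. -/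
def ip {n : ℕ} (g : Met n) (x : Pt n) (v w : Fin n → ℝ) : ℝ :=
  ∑ i, ∑ j, g x i j * v i * w j

/-- Inner product of cotangent vectors at a point, w.r.t. the co-metric `g⁻¹`. -/
def ipCo {n : ℕ} (g : Met n) (x : Pt n) (ξ η : Fin n → ℝ) : ℝ :=
  ∑ i, ∑ j, ginv g x i j * ξ i * η j

/-- `v` is a vertical tangent vector at `x` (tangent to the fiber of `p`). -/
def IsVert (p : Pt m → Pt nb) (x : Pt m) (v : Fin m → ℝ) : Prop :=
  fderiv ℝ p x v = 0

/-- `v` is a horizontal tangent vector at `x`: `g_E`-orthogonal to the vertical space. -/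
def IsHor (gE : Met m) (p : Pt m → Pt nb) (x : Pt m) (v : Fin m → ℝ) : Prop :=
  ∀ w, IsVert p x w → ip gE x v w = 0

/-- `p` is a Riemannian submersion of `(U_E, g_E)` onto `(g_B)`: it is smooth,
its differential is surjective at each point of `U_E`, and `T_x p` is an
isometry from the horizontal space `Hor_x(p)` onto the tangent space below. -/
def IsRiemSubmersionOn (UE : Set (Pt m)) (gE : Met m) (gB : Met nb)
    (p : Pt m → Pt nb) : Prop :=
  (∀ i, ContDiffOn ℝ (⊤ : ℕ∞) (fun x => p x i) UE) ∧
  ∀ x ∈ UE, Function.Surjective (fun v => fderiv ℝ p x v) ∧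
    ∀ v w : Fin m → ℝ, IsHor gE p x v → IsHor gE p x w →
      ip gB (p x) (fderiv ℝ p x v) (fderiv ℝ p x w) = ip gE x v w

end RG


/-! ### Part 0: calculus toolkit -/

namespace RG

variable {n : ℕ}

/-- Everything is `ContDiffAt ℝ ⊤` at points of interest. -/
abbrev SmAt (f : Pt n → ℝ) (x : Pt n) : Prop := ContDiffAt ℝ (⊤ : ℕ∞) f x

lemma smAt_of_on {U : Set (Pt n)} (hU : IsOpen U) {f : Pt n → ℝ}
    (hf : ContDiffOn ℝ (⊤ : ℕ∞) f U) {x : Pt n} (hx : x ∈ U) : SmAt f x :=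
  hf.contDiffAt (hU.mem_nhds hx)

lemma SmAt.diff {f : Pt n → ℝ} {x : Pt n} (hf : SmAt f x) : DifferentiableAt ℝ f x :=
  hf.differentiableAt (by simp)

lemma SmAt.pd {f : Pt n → ℝ} {x : Pt n} (hf : SmAt f x) (s : Fin n) :
    SmAt (pd s f) x :=
  (hf.fderiv_right (by simp)).clm_apply contDiffAt_const

lemma SmAt.dder {f : Pt n → ℝ} {X : VF n} {x : Pt n} (hf : SmAt f x)
    (hX : ∀ i, SmAt (fun y => X y i) x) : SmAt (dder X f) x :=
  (hf.fderiv_right (by simp)).clm_apply (contDiffAt_pi.2 fun i => hX i)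

lemma dder_congr_nhds {f g : Pt n → ℝ} {X : VF n} {x : Pt n} {U : Set (Pt n)}
    (hU : IsOpen U) (hx : x ∈ U) (h : ∀ y ∈ U, f y = g y) :
    dder X f x = dder X g x := by
  unfold RG.dder
  rw [Filter.EventuallyEq.fderiv_eq (f := g)]
  exact Filter.eventuallyEq_of_mem (hU.mem_nhds hx) h

lemma pd_congr_nhds {f g : Pt n → ℝ} {s : Fin n} {x : Pt n} {U : Set (Pt n)}
    (hU : IsOpen U) (hx : x ∈ U) (h : ∀ y ∈ U, f y = g y) :
    pd s f x = pd s g x := by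
  unfold RG.pd
  rw [Filter.EventuallyEq.fderiv_eq (f := g)]
  exact Filter.eventuallyEq_of_mem (hU.mem_nhds hx) h

lemma dder_sub {f g : Pt n → ℝ} {X : VF n} {x : Pt n} (hf : DifferentiableAt ℝ f x)
    (hg : DifferentiableAt ℝ g x) :
    dder X (fun y => f y - g y) x = dder X f x - dder X g x := by
  unfold RG.dder; rw [fderiv_fun_sub hf hg]; simp

lemma dder_mul {f g : Pt n → ℝ} {X : VF n} {x : Pt n} (hf : DifferentiableAt ℝ f x)
    (hg : DifferentiableAt ℝ g x) :
    dder X (fun y => f y * g y) x = f x * dder X g x + g x * dder X f x := by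
  unfold RG.dder; rw [fderiv_fun_mul hf hg]; simp [smul_eq_mul]

lemma dder_const_mul {f : Pt n → ℝ} {c : ℝ} {X : VF n} {x : Pt n}
    (hf : DifferentiableAt ℝ f x) :
    dder X (fun y => c * f y) x = c * dder X f x := by
  unfold RG.dder; rw [fderiv_const_mul hf]; simp

lemma dder_sum {ι : Type*} {s : Finset ι} {f : ι → Pt n → ℝ} {X : VF n} {x : Pt n}
    (hf : ∀ i ∈ s, DifferentiableAt ℝ (f i) x) :
    dder X (fun y => ∑ i ∈ s, f i y) x = ∑ i ∈ s, dder X (f i) x := by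
  unfold RG.dder; rw [fderiv_fun_sum hf]; simp

/-- `X f` expressed via partial derivatives. -/
lemma dder_eq_sum_pd (X : VF n) (f : Pt n → ℝ) (x : Pt n) :
    dder X f x = ∑ i, X x i * pd i f x := by
  unfold RG.dder RG.pd
  have hv : X x = ∑ i, X x i • (Pi.single i (1:ℝ) : Pt n) := by
    funext j
    simp [Pi.single_apply, Finset.sum_apply, mul_comm]
  calc (fderiv ℝ f x) (X x) = (fderiv ℝ f x) (∑ i, X x i • (Pi.single i (1:ℝ) : Pt n)) := by
        rw [← hv]
    _ = ∑ i, X x i * (fderiv ℝ f x) (Pi.single i (1:ℝ) : Pt n) := by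
        rw [map_sum]; simp [smul_eq_mul]

lemma fderiv_apply_pi {Y : VF n} {x v : Pt n}
    (hY : ∀ i, DifferentiableAt ℝ (fun y => Y y i) x) (i : Fin n) :
    fderiv ℝ Y x v i = fderiv ℝ (fun y => Y y i) x v := by
  rw [fderiv_pi hY]; rfl

/-- Second directional derivative, expanded. -/
lemma dder_dder {f : Pt n → ℝ} {X Y : VF n} {x : Pt n} (hf : ContDiffAt ℝ (⊤ : ℕ∞) f x)
    (hY : ∀ i, SmAt (fun y => Y y i) x) :
    dder X (dder Y f) x
      = fderiv ℝ (fderiv ℝ f) x (X x) (Y x) + fderiv ℝ f x (fderiv ℝ Y x (X x)) := by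
  unfold RG.dder
  rw [fderiv_clm_apply ((hf.fderiv_right (m := (⊤ : ℕ∞)) (by simp)).differentiableAt (by simp))
    ((contDiffAt_pi.2 fun i => hY i).differentiableAt (by simp))]
  simp [add_comm]

/-- Commutator of directional derivatives is the bracket derivative. -/
lemma dder_comm {f : Pt n → ℝ} {X Y : VF n} {x : Pt n} (hf : ContDiffAt ℝ (⊤ : ℕ∞) f x)
    (hX : ∀ i, SmAt (fun y => X y i) x) (hY : ∀ i, SmAt (fun y => Y y i) x) :
    dder X (dder Y f) x - dder Y (dder X f) x = dder (bracket X Y) f x := by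
  rw [dder_dder hf hY, dder_dder hf hX]
  have hsym := (hf.isSymmSndFDerivAt (by rw [minSmoothness_of_isRCLikeNormedField]; exact WithTop.coe_le_coe.2 le_top)).eq (X x) (Y x)
  unfold RG.dder
  have hbr : bracket X Y x = fderiv ℝ Y x (X x) - fderiv ℝ X x (Y x) := by
    funext k
    simp only [RG.bracket, Pi.sub_apply]
    rw [fderiv_apply_pi (fun i => (hY i).diff), fderiv_apply_pi (fun i => (hX i).diff)]
  rw [hbr, map_sub]
  rw [hsym]
  ring

end RG


/-! ### Part A1: the inverse metric -/

namespace RG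

variable {n : ℕ}

lemma smAt_det {M : Met n} {x : Pt n} (h : ∀ i j, SmAt (fun y => M y i j) x) :
    SmAt (fun y => (M y).det) x := by
  simp only [Matrix.det_apply]
  refine ContDiffAt.sum fun σ _ => ?_
  have hrw : (fun y => Equiv.Perm.sign σ • ∏ i, M y (σ i) i)
      = fun y => ((Equiv.Perm.sign σ : ℤ) : ℝ) * ∏ i, M y (σ i) i := by
    funext y; simp [Units.smul_def, zsmul_eq_mul]
  rw [hrw]
  exact contDiffAt_const.mul (contDiffAt_prod fun i _ => h (σ i) i)

lemma smAt_adjugate {M : Met n} {x : Pt n} (h : ∀ i j, SmAt (fun y => M y i j) x)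
    (i j : Fin n) : SmAt (fun y => (M y).adjugate i j) x := by
  simp only [Matrix.adjugate_apply]
  refine smAt_det fun a b => ?_
  by_cases haj : a = j
  · simp only [Matrix.updateRow_apply, haj, if_true]
    exact contDiffAt_const
  · simp only [Matrix.updateRow_apply, haj, if_false]
    exact h a b

lemma ginv_entry_eq (g : Met n) (y : Pt n) (i j : Fin n) :
    ginv g y i j = ((g y).det)⁻¹ * (g y).adjugate i j := by
  unfold RG.ginv
  rw [Matrix.inv_def, Ring.inverse_eq_inv']
  simp [Matrix.smul_apply, smul_eq_mul]

/-- Positive definiteness on `U` gives smooth inverse entries. -/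
lemma smAt_ginv {U : Set (Pt n)} (hU : IsOpen U) {g : Met n} (hg : IsRiemannOn U g)
    {x : Pt n} (hx : x ∈ U) (i j : Fin n) : SmAt (fun y => ginv g y i j) x := by
  have hdet : (g x).det ≠ 0 := ne_of_gt (hg.2 x hx).2.det_pos
  have hent : ∀ a b, SmAt (fun y => g y a b) x := fun a b => smAt_of_on hU (hg.1 a b) hx
  have : (fun y => ginv g y i j) = fun y => ((g y).det)⁻¹ * (g y).adjugate i j := by
    funext y; exact ginv_entry_eq g y i j
  rw [this]
  exact ((smAt_det hent).inv hdet).mul (smAt_adjugate hent i j)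

lemma g_symm_at {U : Set (Pt n)} {g : Met n} (hg : IsRiemannOn U g)
    {x : Pt n} (hx : x ∈ U) (i j : Fin n) : g x i j = g x j i :=
  (hg.2 x hx).1.apply j i

lemma isUnit_det_at {U : Set (Pt n)} {g : Met n} (hg : IsRiemannOn U g)
    {x : Pt n} (hx : x ∈ U) : IsUnit ((g x).det) :=
  isUnit_iff_ne_zero.2 (ne_of_gt (hg.2 x hx).2.det_pos)

lemma ginv_symm_at {U : Set (Pt n)} {g : Met n} (hg : IsRiemannOn U g)
    {x : Pt n} (hx : x ∈ U) (i j : Fin n) : ginv g x i j = ginv g x j i := by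
  have h1 : (ginv g x).transpose = ginv g x := by
    unfold RG.ginv
    rw [Matrix.transpose_nonsing_inv, (hg.2 x hx).1]
  have := congrFun (congrFun h1 j) i
  simpa [Matrix.transpose_apply] using this

lemma mul_ginv_at {U : Set (Pt n)} {g : Met n} (hg : IsRiemannOn U g)
    {x : Pt n} (hx : x ∈ U) (i j : Fin n) :
    ∑ k, g x i k * ginv g x k j = if i = j then 1 else 0 := by
  have h1 : g x * (g x)⁻¹ = 1 := Matrix.mul_nonsing_inv _ (isUnit_det_at hg hx)
  have := congrFun (congrFun h1 i) j
  rw [Matrix.mul_apply] at this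
  simp only [RG.ginv]
  rw [this.trans (Matrix.one_apply ..)]

/-- `∑ i, g x i j * ginv g x i s = δ_{js}` (uses symmetry). -/
lemma g_ginv_delta {U : Set (Pt n)} {g : Met n} (hg : IsRiemannOn U g)
    {x : Pt n} (hx : x ∈ U) (j s : Fin n) :
    ∑ i, g x i j * ginv g x i s = if j = s then 1 else 0 := by
  rw [← mul_ginv_at hg hx j s]
  exact Finset.sum_congr rfl fun i _ => by rw [g_symm_at hg hx i j]

/-- `sharp` then `flat` recovers the covector. -/
lemma flat_sharp_at {U : Set (Pt n)} {g : Met n} (hg : IsRiemannOn U g)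
    {x : Pt n} (hx : x ∈ U) (α : OneForm n) (k : Fin n) :
    ∑ i, g x i k * sharp g α x i = α x k := by
  unfold RG.sharp
  rw [Finset.sum_congr rfl fun i _ => Finset.mul_sum ..]
  rw [Finset.sum_comm]
  have : ∀ s, ∑ i, g x i k * (ginv g x s i * α x s) = (if k = s then 1 else 0) * α x s := by
    intro s
    have : ∑ i, g x i k * (ginv g x s i * α x s) = (∑ i, g x i k * ginv g x i s) * α x s := by
      rw [Finset.sum_mul]
      exact Finset.sum_congr rfl fun i _ => by rw [ginv_symm_at hg hx i s]; ring
    rw [this, g_ginv_delta hg hx k s]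
  rw [Finset.sum_congr rfl fun s _ => this s]
  simp

end RG


/-! ### Part A2: Christoffel symbols and the connection -/

namespace RG

variable {n : ℕ}

lemma pd_g_symm {U : Set (Pt n)} (hU : IsOpen U) {g : Met n} (hg : IsRiemannOn U g)
    {x : Pt n} (hx : x ∈ U) (s i j : Fin n) :
    pd s (fun y => g y i j) x = pd s (fun y => g y j i) x :=
  pd_congr_nhds hU hx fun y hy => g_symm_at hg hy i j

lemma contract_chr {U : Set (Pt n)} {g : Met n} (hg : IsRiemannOn U g)
    {x : Pt n} (hx : x ∈ U) (j k l : Fin n) :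
    ∑ i, g x i j * chr g i k l x
      = (1/2) * (pd k (fun y => g y l j) x + pd l (fun y => g y k j) x
          - pd j (fun y => g y k l) x) := by
  have h1 : ∑ i, g x i j * chr g i k l x
      = ∑ s, (∑ i, g x i j * ginv g x i s) *
          ((1/2) * (pd k (fun y => g y l s) x + pd l (fun y => g y k s) x
            - pd s (fun y => g y k l) x)) := by
    unfold RG.chr
    simp only [Finset.mul_sum]
    rw [Finset.sum_comm]
    refine Finset.sum_congr rfl fun s _ => ?_
    simp only [Finset.sum_mul]
    exact Finset.sum_congr rfl fun i _ => by ring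
  rw [h1]
  rw [Finset.sum_congr rfl fun s _ => by rw [g_ginv_delta hg hx j s]]
  simp

lemma chr_lower {U : Set (Pt n)} (hU : IsOpen U) {g : Met n} (hg : IsRiemannOn U g)
    {x : Pt n} (hx : x ∈ U) (k l j : Fin n) :
    pd k (fun y => g y l j) x
      = (∑ i, g x i j * chr g i k l x) + (∑ i, g x l i * chr g i k j x) := by
  have h2 : ∑ i, g x l i * chr g i k j x = ∑ i, g x i l * chr g i k j x :=
    Finset.sum_congr rfl fun i _ => by rw [g_symm_at hg hx l i]
  rw [h2, contract_chr hg hx j k l, contract_chr hg hx l k j]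
  rw [pd_g_symm hU hg hx k j l]
  ring

lemma chr_symm {U : Set (Pt n)} (hU : IsOpen U) {g : Met n} (hg : IsRiemannOn U g)
    {x : Pt n} (hx : x ∈ U) (k i j : Fin n) :
    chr g k i j x = chr g k j i x := by
  unfold RG.chr
  congr 1
  refine Finset.sum_congr rfl fun l _ => ?_
  rw [pd_g_symm hU hg hx l i j]
  ring

lemma smAt_chr {U : Set (Pt n)} (hU : IsOpen U) {g : Met n} (hg : IsRiemannOn U g)
    {x : Pt n} (hx : x ∈ U) (k i j : Fin n) : SmAt (chr g k i j) x := by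
  unfold RG.chr
  refine contDiffAt_const.mul (ContDiffAt.sum fun l _ => (smAt_ginv hU hg hx k l).mul ?_)
  exact (((smAt_of_on hU (hg.1 j l) hx).pd i).add
      ((smAt_of_on hU (hg.1 i l) hx).pd j)).sub ((smAt_of_on hU (hg.1 i j) hx).pd l)

lemma smAt_sharp {U : Set (Pt n)} (hU : IsOpen U) {g : Met n} (hg : IsRiemannOn U g)
    {x : Pt n} (hx : x ∈ U) {α : OneForm n} (hα : SmoothSec U α) (k : Fin n) :
    SmAt (fun y => sharp g α y k) x := by
  unfold RG.sharp
  exact ContDiffAt.sum fun i _ =>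
    (smAt_ginv hU hg hx i k).mul (smAt_of_on hU (hα i) hx)

lemma smAt_covV {U : Set (Pt n)} (hU : IsOpen U) {g : Met n} (hg : IsRiemannOn U g)
    {x : Pt n} (hx : x ∈ U) {X Y : VF n} (hX : ∀ i, SmAt (fun y => X y i) x)
    (hY : ∀ i, SmAt (fun y => Y y i) x) (k : Fin n) :
    SmAt (fun y => covV g X Y y k) x := by
  unfold RG.covV
  refine ContDiffAt.add ?_ (ContDiffAt.sum fun i _ => ContDiffAt.sum fun j _ =>
    ((smAt_chr hU hg hx k i j).mul (hX i)).mul (hY j))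
  exact (hY k).dder hX

end RG


/-! ### Part A3: compatibility, torsion, pairings -/

namespace RG

variable {n : ℕ}

lemma sum3_rot (t : Fin n → Fin n → Fin n → ℝ) :
    ∑ i, ∑ j, ∑ s, t s j i = ∑ a, ∑ b, ∑ c, t a b c := by
  calc ∑ i, ∑ j, ∑ s, t s j i
      = ∑ i, ∑ s, ∑ j, t s j i := Finset.sum_congr rfl fun i _ => Finset.sum_comm
    _ = ∑ s, ∑ i, ∑ j, t s j i := Finset.sum_comm
    _ = ∑ s, ∑ j, ∑ i, t s j i := Finset.sum_congr rfl fun s _ => Finset.sum_comm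

lemma sum3_inner (u : Fin n → Fin n → Fin n → ℝ) :
    ∑ i, ∑ j, ∑ s, u i s j = ∑ a, ∑ b, ∑ c, u a b c :=
  Finset.sum_congr rfl fun i _ => Finset.sum_comm

/-- Metric compatibility of the Levi-Civita connection. -/
lemma compat {U : Set (Pt n)} (hU : IsOpen U) {g : Met n} (hg : IsRiemannOn U g)
    {x : Pt n} (hx : x ∈ U) {Z V W : VF n}
    (hV : ∀ i, DifferentiableAt ℝ (fun y => V y i) x)
    (hW : ∀ i, DifferentiableAt ℝ (fun y => W y i) x) :
    dder Z (gV g V W) x = gV g (covV g Z V) W x + gV g V (covV g Z W) x := by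
  have hgd : ∀ i j, DifferentiableAt ℝ (fun y => g y i j) x :=
    fun i j => (smAt_of_on hU (hg.1 i j) hx).diff
  -- expand the left-hand side by the product rule
  have h1 : dder Z (gV g V W) x
      = ∑ i, ∑ j, (dder Z (fun y => g y i j) x * V x i * W x j
          + g x i j * dder Z (fun y => V y i) x * W x j
          + g x i j * V x i * dder Z (fun y => W y j) x) := by
    unfold RG.gV
    rw [dder_sum (fun i _ => by
      exact DifferentiableAt.fun_sum fun j _ => ((hgd i j).fun_mul (hV i)).fun_mul (hW j))]
    refine Finset.sum_congr rfl fun i _ => ?_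
    rw [dder_sum (fun j _ => ((hgd i j).fun_mul (hV i)).fun_mul (hW j))]
    refine Finset.sum_congr rfl fun j _ => ?_
    rw [dder_mul ((hgd i j).fun_mul (hV i)) (hW j), dder_mul (hgd i j) (hV i)]
    ring
  rw [h1]
  -- expand the right-hand side
  unfold RG.gV RG.covV
  -- `dder` is definitionally the fderiv evaluation appearing in covV
  show _ = (∑ i, ∑ j, g x i j * (dder Z (fun y => V y i) x
        + ∑ k, ∑ l, chr g i k l x * Z x k * V x l) * W x j)
      + (∑ i, ∑ j, g x i j * V x i * (dder Z (fun y => W y j) x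
        + ∑ k, ∑ l, chr g j k l x * Z x k * W x l))
  -- reduce to the Christoffel identity
  have key : ∑ i, ∑ j, dder Z (fun y => g y i j) x * V x i * W x j
      = (∑ i, ∑ j, g x i j * (∑ k, ∑ l, chr g i k l x * Z x k * V x l) * W x j)
        + (∑ i, ∑ j, g x i j * V x i * (∑ k, ∑ l, chr g j k l x * Z x k * W x l)) := by
    -- define the contracted Christoffel quantity
    set q : Fin n → Fin n → ℝ := fun a b => ∑ k, chr g a k b x * Z x k with hq
    have hpd : ∀ i j, dder Z (fun y => g y i j) x
        = (∑ s, g x s j * q s i) + (∑ s, g x i s * q s j) := by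
      intro i j
      rw [dder_eq_sum_pd]
      have : ∀ k, Z x k * pd k (fun y => g y i j) x
          = (∑ s, g x s j * (chr g s k i x * Z x k))
            + (∑ s, g x i s * (chr g s k j x * Z x k)) := by
        intro k
        rw [chr_lower hU hg hx k i j, mul_add, Finset.mul_sum, Finset.mul_sum]
        congr 1
        · exact Finset.sum_congr rfl fun s _ => by ring
        · exact Finset.sum_congr rfl fun s _ => by ring
      rw [Finset.sum_congr rfl fun k _ => this k]
      rw [Finset.sum_add_distrib]
      congr 1
      · rw [Finset.sum_comm]
        refine Finset.sum_congr rfl fun s _ => ?_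
        rw [hq, Finset.mul_sum]
      · rw [Finset.sum_comm]
        refine Finset.sum_congr rfl fun s _ => ?_
        rw [hq, Finset.mul_sum]
    -- rewrite the covariant-derivative correction terms via q
    have hcorr : ∀ a (R : VF n), (∑ k, ∑ l, chr g a k l x * Z x k * R x l)
        = ∑ l, q a l * R x l := by
      intro a R
      rw [Finset.sum_comm]
      refine Finset.sum_congr rfl fun l _ => ?_
      rw [hq, Finset.sum_mul]
    calc ∑ i, ∑ j, dder Z (fun y => g y i j) x * V x i * W x j
        = ∑ i, ∑ j, (∑ s, g x s j * q s i * (V x i * W x j)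
            + ∑ s, g x i s * q s j * (V x i * W x j)) := by
          refine Finset.sum_congr rfl fun i _ => Finset.sum_congr rfl fun j _ => ?_
          rw [hpd i j]
          rw [show ∀ (A B c d : ℝ), (A + B) * c * d = A * (c * d) + B * (c * d) from
            fun A B c d => by ring]
          rw [Finset.sum_mul, Finset.sum_mul]
      _ = (∑ i, ∑ j, ∑ s, g x s j * q s i * (V x i * W x j))
            + (∑ i, ∑ j, ∑ s, g x i s * q s j * (V x i * W x j)) := by
          rw [← Finset.sum_add_distrib]
          exact Finset.sum_congr rfl fun i _ => by rw [← Finset.sum_add_distrib]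
      _ = (∑ i, ∑ j, g x i j * (∑ l, q i l * V x l) * W x j)
            + (∑ i, ∑ j, g x i j * V x i * (∑ l, q j l * W x l)) := by
          congr 1
          · rw [sum3_rot (fun a b c => g x a b * q a c * (V x c * W x b))]
            refine Finset.sum_congr rfl fun a _ => Finset.sum_congr rfl fun b _ => ?_
            rw [Finset.mul_sum, Finset.sum_mul]
            exact Finset.sum_congr rfl fun c _ => by ring
          · rw [sum3_inner (fun a b c => g x a b * q b c * (V x a * W x c))]
            refine Finset.sum_congr rfl fun a _ => Finset.sum_congr rfl fun b _ => ?_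
            rw [Finset.mul_sum]
            exact Finset.sum_congr rfl fun c _ => by ring
      _ = _ := by
          congr 1
          · exact Finset.sum_congr rfl fun i _ => Finset.sum_congr rfl fun j _ => by
              rw [hcorr i V]
          · exact Finset.sum_congr rfl fun i _ => Finset.sum_congr rfl fun j _ => by
              rw [hcorr j W]
  -- put everything together
  simp only [mul_add, add_mul, Finset.sum_add_distrib]
  rw [key]
  ring

end RG


/-! ### Part A4: torsion-freeness and pairings -/

namespace RG

variable {n : ℕ}

/-- Torsion-freeness: `∇_X Y − ∇_Y X = [X,Y]`. -/
lemma torsion {U : Set (Pt n)} (hU : IsOpen U) {g : Met n} (hg : IsRiemannOn U g)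
    {x : Pt n} (hx : x ∈ U) (X Y : VF n) (k : Fin n) :
    covV g X Y x k - covV g Y X x k = bracket X Y x k := by
  unfold RG.covV RG.bracket
  have hsum : ∑ i, ∑ j, chr g k i j x * X x i * Y x j
      = ∑ i, ∑ j, chr g k i j x * Y x i * X x j := by
    rw [Finset.sum_comm]
    refine Finset.sum_congr rfl fun i _ => Finset.sum_congr rfl fun j _ => ?_
    rw [chr_symm hU hg hx k j i]
    ring
  rw [hsum]
  ring

lemma gV_symm_at {U : Set (Pt n)} {g : Met n} (hg : IsRiemannOn U g)
    {x : Pt n} (hx : x ∈ U) (X Y : VF n) :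
    gV g X Y x = gV g Y X x := by
  unfold RG.gV
  rw [Finset.sum_comm]
  exact Finset.sum_congr rfl fun i _ => Finset.sum_congr rfl fun j _ => by
    rw [g_symm_at hg hx j i]; ring

/-- `g(α♯, Z) = α(Z)`. -/
lemma gV_sharp_at {U : Set (Pt n)} {g : Met n} (hg : IsRiemannOn U g)
    {x : Pt n} (hx : x ∈ U) (α : OneForm n) (Z : VF n) :
    gV g (sharp g α) Z x = pairF α Z x := by
  unfold RG.gV RG.pairF
  rw [Finset.sum_comm]
  refine Finset.sum_congr rfl fun j _ => ?_
  have : ∑ i, g x i j * sharp g α x i * Z x j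
      = (∑ i, g x i j * sharp g α x i) * Z x j := by
    rw [Finset.sum_mul]
  rw [this, flat_sharp_at hg hx α j]

/-- `g(α♯, β♯) = g⁻¹(α,β)`. -/
lemma gV_sharp_sharp_at {U : Set (Pt n)} {g : Met n} (hg : IsRiemannOn U g)
    {x : Pt n} (hx : x ∈ U) (α β : OneForm n) :
    gV g (sharp g α) (sharp g β) x = gF g α β x := by
  rw [gV_sharp_at hg hx]
  have key : ∀ i, α x i * sharp g β x i = ∑ j, ginv g x i j * α x i * β x j := by
    intro i
    unfold RG.sharp
    rw [Finset.mul_sum]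
    refine Finset.sum_congr rfl fun j _ => ?_
    rw [ginv_symm_at hg hx i j]
    ring
  unfold RG.pairF RG.gF
  exact Finset.sum_congr rfl fun i _ => key i

end RG


/-! ### Part A5: closed forms, Koszul formula -/

namespace RG

variable {n : ℕ}

lemma smAt_gV {U : Set (Pt n)} (hU : IsOpen U) {g : Met n} (hg : IsRiemannOn U g)
    {x : Pt n} (hx : x ∈ U) {V W : VF n} (hV : ∀ i, SmAt (fun y => V y i) x)
    (hW : ∀ i, SmAt (fun y => W y i) x) : SmAt (gV g V W) x := by
  unfold RG.gV
  exact ContDiffAt.sum fun i _ => ContDiffAt.sum fun j _ =>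
    ((smAt_of_on hU (hg.1 i j) hx).mul (hV i)).mul (hW j)

lemma bracket_self (X : VF n) (x : Pt n) (k : Fin n) : bracket X X x k = 0 := sub_self _

lemma bracket_anti (X Y : VF n) (x : Pt n) (k : Fin n) :
    bracket Y X x k = -(bracket X Y x k) := by
  unfold RG.bracket; ring

lemma gV_torsion_left {U : Set (Pt n)} (hU : IsOpen U) {g : Met n} (hg : IsRiemannOn U g)
    {x : Pt n} (hx : x ∈ U) (X Y Z : VF n) :
    gV g (covV g X Y) Z x - gV g (covV g Y X) Z x = gV g (bracket X Y) Z x := by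
  unfold RG.gV
  rw [← Finset.sum_sub_distrib]
  refine Finset.sum_congr rfl fun i _ => ?_
  rw [← Finset.sum_sub_distrib]
  refine Finset.sum_congr rfl fun j _ => ?_
  rw [← torsion hU hg hx X Y i]
  ring

lemma gV_torsion_right {U : Set (Pt n)} (hU : IsOpen U) {g : Met n} (hg : IsRiemannOn U g)
    {x : Pt n} (hx : x ∈ U) (Z V W : VF n) :
    gV g Z (covV g V W) x - gV g Z (covV g W V) x = gV g Z (bracket V W) x := by
  unfold RG.gV
  rw [← Finset.sum_sub_distrib]
  refine Finset.sum_congr rfl fun i _ => ?_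
  rw [← Finset.sum_sub_distrib]
  refine Finset.sum_congr rfl fun j _ => ?_
  rw [← torsion hU hg hx V W j]
  ring

/-- For a closed 1-form: `V(α(W)) − W(α(V)) = α([V,W])`. -/
lemma closed_pair {U : Set (Pt n)} (hU : IsOpen U) {x : Pt n} (hx : x ∈ U)
    {α : OneForm n} (hα : SmoothSec U α) (hcα : IsClosedOn U α) {V W : VF n}
    (hV : ∀ i, SmAt (fun y => V y i) x) (hW : ∀ i, SmAt (fun y => W y i) x) :
    dder V (pairF α W) x - dder W (pairF α V) x = pairF α (bracket V W) x := by
  have h1 : dder V (pairF α W) x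
      = ∑ i, (α x i * dder V (fun y => W y i) x
          + W x i * (∑ k, V x k * pd k (fun y => α y i) x)) := by
    unfold RG.pairF
    rw [dder_sum (fun i _ => ((smAt_of_on hU (hα i) hx).diff.fun_mul (hW i).diff))]
    refine Finset.sum_congr rfl fun i _ => ?_
    rw [dder_mul (smAt_of_on hU (hα i) hx).diff (hW i).diff,
      dder_eq_sum_pd V (fun y => α y i) x]
  have h2 : dder W (pairF α V) x
      = ∑ i, (α x i * dder W (fun y => V y i) x
          + V x i * (∑ k, W x k * pd k (fun y => α y i) x)) := by
    unfold RG.pairF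
    rw [dder_sum (fun i _ => ((smAt_of_on hU (hα i) hx).diff.fun_mul (hV i).diff))]
    refine Finset.sum_congr rfl fun i _ => ?_
    rw [dder_mul (smAt_of_on hU (hα i) hx).diff (hV i).diff,
      dder_eq_sum_pd W (fun y => α y i) x]
  have h3 : pairF α (bracket V W) x
      = ∑ i, α x i * (dder V (fun y => W y i) x - dder W (fun y => V y i) x) := rfl
  have key : ∑ i, W x i * (∑ k, V x k * pd k (fun y => α y i) x)
      = ∑ i, V x i * (∑ k, W x k * pd k (fun y => α y i) x) := by
    rw [Finset.sum_congr rfl fun i (_ : i ∈ Finset.univ) => Finset.mul_sum ..,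
      Finset.sum_congr rfl fun i (_ : i ∈ Finset.univ) => Finset.mul_sum ..]
    rw [Finset.sum_comm]
    refine Finset.sum_congr rfl fun i _ => Finset.sum_congr rfl fun k _ => ?_
    rw [hcα x hx i k]
    ring
  rw [h1, h2, h3]
  simp only [mul_sub, Finset.sum_add_distrib, Finset.sum_sub_distrib]
  linarith [key]

/-- Symmetry of `∇α` for a closed 1-form. -/
lemma nabla_sharp_symm {U : Set (Pt n)} (hU : IsOpen U) {g : Met n}
    (hg : IsRiemannOn U g) {x : Pt n} (hx : x ∈ U)
    {α : OneForm n} (hα : SmoothSec U α) (hcα : IsClosedOn U α) {V W : VF n}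
    (hV : ∀ i, SmAt (fun y => V y i) x) (hW : ∀ i, SmAt (fun y => W y i) x) :
    gV g (covV g V (sharp g α)) W x = gV g (covV g W (sharp g α)) V x := by
  have hX : ∀ i, SmAt (fun y => sharp g α y i) x := smAt_sharp hU hg hx hα
  have c1 := compat hU hg hx (Z := V) (V := sharp g α) (W := W)
    (fun i => (hX i).diff) (fun i => (hW i).diff)
  have c2 := compat hU hg hx (Z := W) (V := sharp g α) (W := V)
    (fun i => (hX i).diff) (fun i => (hV i).diff)
  have d1 : dder V (gV g (sharp g α) W) x = dder V (pairF α W) x :=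
    dder_congr_nhds hU hx fun y hy => gV_sharp_at hg hy α W
  have d2 : dder W (gV g (sharp g α) V) x = dder W (pairF α V) x :=
    dder_congr_nhds hU hx fun y hy => gV_sharp_at hg hy α V
  have t := gV_torsion_right hU hg hx (sharp g α) V W
  have tp : gV g (sharp g α) (bracket V W) x = pairF α (bracket V W) x :=
    gV_sharp_at hg hx α (bracket V W)
  have cp := closed_pair hU hx hα hcα hV hW
  linarith [c1, c2, d1, d2, t, tp, cp]

/-- Koszul formula for sharps of closed forms:
`2⟨∇_X Y, Z⟩ = Z⟨X,Y⟩ + ⟨[X,Y],Z⟩`. -/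
lemma koszul {U : Set (Pt n)} (hU : IsOpen U) {g : Met n} (hg : IsRiemannOn U g)
    {x : Pt n} (hx : x ∈ U) {α β : OneForm n}
    (hα : SmoothSec U α) (hcα : IsClosedOn U α)
    (hβ : SmoothSec U β) (hcβ : IsClosedOn U β) {Z : VF n}
    (hZ : ∀ i, SmAt (fun y => Z y i) x) :
    2 * gV g (covV g (sharp g α) (sharp g β)) Z x
      = dder Z (gV g (sharp g α) (sharp g β)) x
        + gV g (bracket (sharp g α) (sharp g β)) Z x := by
  have hX : ∀ i, SmAt (fun y => sharp g α y i) x := smAt_sharp hU hg hx hα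
  have hY : ∀ i, SmAt (fun y => sharp g β y i) x := smAt_sharp hU hg hx hβ
  have E1 := gV_torsion_left hU hg hx (sharp g α) (sharp g β) Z
  have E2 := nabla_sharp_symm hU hg hx hβ hcβ hX hZ
  have E3 := nabla_sharp_symm hU hg hx hα hcα hY hZ
  have E4 := compat hU hg hx (Z := Z) (V := sharp g α) (W := sharp g β)
    (fun i => (hX i).diff) (fun i => (hY i).diff)
  have E5 := gV_symm_at hg hx (sharp g α) (covV g Z (sharp g β))
  linarith [E1, E2, E3, E4, E5]

lemma sharp_flat_vec {U : Set (Pt n)} {g : Met n} (hg : IsRiemannOn U g)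
    {x : Pt n} (hx : x ∈ U) (v : Fin n → ℝ) (k : Fin n) :
    ∑ s, ginv g x s k * (∑ i, g x i s * v i) = v k := by
  rw [Finset.sum_congr rfl fun s (_ : s ∈ Finset.univ) => Finset.mul_sum ..]
  rw [Finset.sum_comm]
  have : ∀ i, ∑ s, ginv g x s k * (g x i s * v i)
      = (∑ s, g x i s * ginv g x s k) * v i := by
    intro i
    rw [Finset.sum_mul]
    exact Finset.sum_congr rfl fun s _ => by ring
  rw [Finset.sum_congr rfl fun i _ => this i]
  rw [Finset.sum_congr rfl fun i (_ : i ∈ Finset.univ) => by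
    rw [mul_ginv_at hg hx i k]]
  simp

/-- The explicit formula `∇_X Y = ½((d⟨X,Y⟩)♯ + [X,Y])` for sharps of closed forms. -/
lemma covV_sharp_eq {U : Set (Pt n)} (hU : IsOpen U) {g : Met n} (hg : IsRiemannOn U g)
    {x : Pt n} (hx : x ∈ U) {α β : OneForm n}
    (hα : SmoothSec U α) (hcα : IsClosedOn U α)
    (hβ : SmoothSec U β) (hcβ : IsClosedOn U β) (k : Fin n) :
    covV g (sharp g α) (sharp g β) x k
      = (1/2) * (sharp g (dF (gV g (sharp g α) (sharp g β))) x k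
          + bracket (sharp g α) (sharp g β) x k) := by
  set X := sharp g α with hXd
  set Y := sharp g β with hYd
  set f := gV g X Y with hfd
  have hks : ∀ s, 2 * (∑ i, g x i s * covV g X Y x i)
      = pd s f x + ∑ i, g x i s * bracket X Y x i := by
    intro s
    have hk := koszul hU hg hx hα hcα hβ hcβ
      (Z := fun _ => Pi.single s (1:ℝ)) (fun i => contDiffAt_const)
    have hcollapse : ∀ W : VF n, gV g W (fun _ => Pi.single s (1:ℝ)) x
        = ∑ i, g x i s * W x i := by
      intro W
      unfold RG.gV
      refine Finset.sum_congr rfl fun i _ => ?_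
      rw [Finset.sum_eq_single s (fun b _ hb => by
        simp [Pi.single_apply, hb]) (by simp)]
      simp [Pi.single_apply]
    rw [hcollapse, hcollapse] at hk
    have hdd : dder (fun _ => Pi.single s (1:ℝ)) f x = pd s f x := rfl
    rw [hdd] at hk
    exact hk
  have main := sharp_flat_vec hg hx (covV g X Y x) k
  calc covV g X Y x k
      = ∑ s, ginv g x s k * (∑ i, g x i s * covV g X Y x i) := main.symm
    _ = ∑ s, ginv g x s k * ((1/2) * (pd s f x + ∑ i, g x i s * bracket X Y x i)) := by
        refine Finset.sum_congr rfl fun s _ => ?_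
        rw [show (∑ i, g x i s * covV g X Y x i)
          = (1/2) * (pd s f x + ∑ i, g x i s * bracket X Y x i) from by
            linarith [hks s]]
    _ = (1/2) * ((∑ s, ginv g x s k * pd s f x)
          + ∑ s, ginv g x s k * (∑ i, g x i s * bracket X Y x i)) := by
        rw [mul_add, Finset.mul_sum, Finset.mul_sum, ← Finset.sum_add_distrib]
        exact Finset.sum_congr rfl fun s _ => by ring
    _ = (1/2) * (sharp g (dF f) x k + bracket X Y x k) := by
        rw [sharp_flat_vec hg hx (bracket X Y x) k]
        rfl

end RG


/-! ### Part A6: the curvature identity for closed 1-forms -/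

namespace RG

variable {n : ℕ}

lemma sum2_const_mul (c : ℝ) (t : Fin n → Fin n → ℝ) :
    ∑ i, ∑ j, c * t i j = c * ∑ i, ∑ j, t i j := by
  rw [Finset.mul_sum]
  exact Finset.sum_congr rfl fun i _ => by rw [Finset.mul_sum]

lemma ip_zero_left (g : Met n) (x : Pt n) (w : Fin n → ℝ) :
    ip g x (fun _ => (0:ℝ)) w = 0 := by unfold RG.ip; simp

lemma ip_zero_right (g : Met n) (x : Pt n) (v : Fin n → ℝ) :
    ip g x v (fun _ => (0:ℝ)) = 0 := by unfold RG.ip; simp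

lemma ip_neg_right (g : Met n) (x : Pt n) (v w : Fin n → ℝ) :
    ip g x v (fun k => -(w k)) = -(ip g x v w) := by
  unfold RG.ip
  rw [← Finset.sum_neg_distrib]
  refine Finset.sum_congr rfl fun i _ => ?_
  rw [← Finset.sum_neg_distrib]
  exact Finset.sum_congr rfl fun j _ => by ring

lemma ip_symm_at {U : Set (Pt n)} {g : Met n} (hg : IsRiemannOn U g)
    {x : Pt n} (hx : x ∈ U) (v w : Fin n → ℝ) :
    ip g x v w = ip g x w v := by
  unfold RG.ip
  rw [Finset.sum_comm]
  exact Finset.sum_congr rfl fun i _ => Finset.sum_congr rfl fun j _ => by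
    rw [g_symm_at hg hx j i]; ring

/-- Evaluation of `g(A,B)` for `A = ½(s+b)`, `B = ½(t+c)`. -/
lemma gV_eval_halves {g : Met n} {x : Pt n} {A B : VF n} {s b t c : Fin n → ℝ}
    (hA : ∀ k, A x k = (1/2) * (s k + b k)) (hB : ∀ k, B x k = (1/2) * (t k + c k)) :
    gV g A B x = (1/4) * (ip g x s t + ip g x s c + ip g x b t + ip g x b c) := by
  unfold RG.gV RG.ip
  rw [Finset.sum_congr rfl fun i (_ : i ∈ Finset.univ) => Finset.sum_congr rfl
    fun j (_ : j ∈ Finset.univ) => show g x i j * A x i * B x j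
      = (1/4) * (g x i j * s i * t j) + (1/4) * (g x i j * s i * c j)
        + ((1/4) * (g x i j * b i * t j) + (1/4) * (g x i j * b i * c j)) from by
      rw [hA i, hB j]; ring]
  simp only [Finset.sum_add_distrib]
  rw [sum2_const_mul (1/4) (fun i j => g x i j * s i * t j),
    sum2_const_mul (1/4) (fun i j => g x i j * s i * c j),
    sum2_const_mul (1/4) (fun i j => g x i j * b i * t j),
    sum2_const_mul (1/4) (fun i j => g x i j * b i * c j)]
  ring

lemma pairF_dF (h : Pt n → ℝ) (W : VF n) (y : Pt n) :
    pairF (dF h) W y = dder W h y := by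
  unfold RG.pairF RG.dF
  rw [dder_eq_sum_pd]
  exact Finset.sum_congr rfl fun i _ => by ring

lemma gF_symm_at {U : Set (Pt n)} {g : Met n} (hg : IsRiemannOn U g)
    {x : Pt n} (hx : x ∈ U) (ξ η : OneForm n) :
    gF g ξ η x = gF g η ξ x := by
  unfold RG.gF
  rw [Finset.sum_comm]
  exact Finset.sum_congr rfl fun i _ => Finset.sum_congr rfl fun j _ => by
    rw [ginv_symm_at hg hx j i]; ring

lemma smAt_bracket {X Y : VF n} {x : Pt n} (hX : ∀ i, SmAt (fun y => X y i) x)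
    (hY : ∀ i, SmAt (fun y => Y y i) x) (k : Fin n) :
    SmAt (fun y => bracket X Y y k) x := by
  unfold RG.bracket
  exact ((hY k).dder hX).sub ((hX k).dder hY)

lemma gV_sub3_left (g : Met n) (A B C W : VF n) (x : Pt n) :
    gV g (A - B - C) W x = gV g A W x - gV g B W x - gV g C W x := by
  unfold RG.gV
  rw [← Finset.sum_sub_distrib, ← Finset.sum_sub_distrib]
  refine Finset.sum_congr rfl fun i _ => ?_
  rw [← Finset.sum_sub_distrib, ← Finset.sum_sub_distrib]
  refine Finset.sum_congr rfl fun j _ => ?_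
  simp only [Pi.sub_apply]
  ring

/-- **The curvature identity**: for closed 1-forms `α, β` with `X = α♯`, `Y = β♯`,
`⟨R(X,Y)Y,X⟩ = ½XXb + ½YYa − ½XYf − ½YXf − ¼G(da,db) + ¼G(df,df) − ¾|[X,Y]|²`. -/
lemma star_identity {U : Set (Pt n)} (hU : IsOpen U) {g : Met n} (hg : IsRiemannOn U g)
    {α β : OneForm n} (hα : SmoothSec U α) (hcα : IsClosedOn U α)
    (hβ : SmoothSec U β) (hcβ : IsClosedOn U β) {x : Pt n} (hx : x ∈ U) :
    gV g (Rcurv g (sharp g α) (sharp g β) (sharp g β)) (sharp g α) x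
      = (1/2) * dder (sharp g α) (dder (sharp g α) (gV g (sharp g β) (sharp g β))) x
        + (1/2) * dder (sharp g β) (dder (sharp g β) (gV g (sharp g α) (sharp g α))) x
        - (1/2) * dder (sharp g α) (dder (sharp g β) (gV g (sharp g α) (sharp g β))) x
        - (1/2) * dder (sharp g β) (dder (sharp g α) (gV g (sharp g α) (sharp g β))) x
        - (1/4) * gF g (dF (gV g (sharp g α) (sharp g α)))
            (dF (gV g (sharp g β) (sharp g β))) x
        + (1/4) * gF g (dF (gV g (sharp g α) (sharp g β)))
            (dF (gV g (sharp g α) (sharp g β))) x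
        - (3/4) * gV g (bracket (sharp g α) (sharp g β))
            (bracket (sharp g α) (sharp g β)) x := by
  set X : VF n := sharp g α with hXdef
  set Y : VF n := sharp g β with hYdef
  set a : Pt n → ℝ := gV g X X with hadef
  set b : Pt n → ℝ := gV g Y Y with hbdef
  set f : Pt n → ℝ := gV g X Y with hfdef
  set Bv : VF n := bracket X Y with hBdef
  -- smoothness of everything at points of U
  have hXs : ∀ y ∈ U, ∀ i, SmAt (fun z => X z i) y := fun y hy => smAt_sharp hU hg hy hα
  have hYs : ∀ y ∈ U, ∀ i, SmAt (fun z => Y z i) y := fun y hy => smAt_sharp hU hg hy hβ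
  have hBs : ∀ i, SmAt (fun z => Bv z i) x := fun i =>
    smAt_bracket (hXs x hx) (hYs x hx) i
  have hfs : ∀ y ∈ U, SmAt f y := fun y hy => smAt_gV hU hg hy (hXs y hy) (hYs y hy)
  have has : ∀ y ∈ U, SmAt a y := fun y hy => smAt_gV hU hg hy (hXs y hy) (hXs y hy)
  have hbs : ∀ y ∈ U, SmAt b y := fun y hy => smAt_gV hU hg hy (hYs y hy) (hYs y hy)
  -- component formulas for the covariant derivatives
  have V2 : ∀ y ∈ U, ∀ k, covV g X Y y k
      = (1/2) * (sharp g (dF f) y k + Bv y k) := fun y hy k =>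
    covV_sharp_eq hU hg hy hα hcα hβ hcβ k
  have V1 : ∀ y ∈ U, ∀ k, covV g Y Y y k
      = (1/2) * (sharp g (dF b) y k + (fun _ => (0:ℝ)) k) := by
    intro y hy k
    have := covV_sharp_eq hU hg hy hβ hcβ hβ hcβ k
    rw [bracket_self] at this
    exact this
  have V4 : ∀ y ∈ U, ∀ k, covV g X X y k
      = (1/2) * (sharp g (dF a) y k + (fun _ => (0:ℝ)) k) := by
    intro y hy k
    have := covV_sharp_eq hU hg hy hα hcα hα hcα k
    rw [bracket_self] at this
    exact this
  have V3 : ∀ y ∈ U, ∀ k, covV g Y X y k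
      = (1/2) * (sharp g (dF f) y k + (fun q => -(Bv y q)) k) := by
    intro y hy k
    have h0 := covV_sharp_eq hU hg hy hβ hcβ hα hcα k
    have h1 : sharp g (dF (gV g Y X)) y k = sharp g (dF f) y k := by
      unfold RG.sharp RG.dF
      refine Finset.sum_congr rfl fun i _ => ?_
      rw [pd_congr_nhds hU hy (fun z hz => gV_symm_at hg hz Y X)]
    rw [h1, bracket_anti] at h0
    exact h0
  -- first-order scalar identities on U
  have P1 : ∀ y ∈ U, gV g (covV g Y Y) X y = (1/2) * dder X b y := by
    intro y hy
    rw [gV_eval_halves (V1 y hy) (fun k => show X y k = (1/2) * (X y k + X y k) from by ring)]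
    simp only [ip_zero_left]
    have : ip g y (sharp g (dF b) y) (X y) = pairF (dF b) X y :=
      gV_sharp_at hg hy (dF b) X
    rw [show ip g y (sharp g (dF b) y) (X y) = dder X b y from by
      rw [this, pairF_dF]]
    ring
  have P2 : ∀ y ∈ U, gV g (covV g X Y) X y = dder X f y - (1/2) * dder Y a y := by
    intro y hy
    rw [gV_eval_halves (V2 y hy) (fun k => show X y k = (1/2) * (X y k + X y k) from by ring)]
    have hS : ip g y (sharp g (dF f) y) (X y) = dder X f y := by
      rw [show ip g y (sharp g (dF f) y) (X y) = pairF (dF f) X y from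
        gV_sharp_at hg hy (dF f) X, pairF_dF]
    have hB : ip g y (Bv y) (X y) = dder X f y - dder Y a y := by
      have e1 : ip g y (Bv y) (X y) = ip g y (X y) (Bv y) := ip_symm_at hg hy _ _
      have e2 : ip g y (X y) (Bv y) = pairF α Bv y := gV_sharp_at hg hy α Bv
      have e3 := closed_pair hU hy hα hcα (hXs y hy) (hYs y hy)
      have e4 : dder X (pairF α Y) y = dder X f y :=
        dder_congr_nhds hU hy fun z hz => (gV_sharp_at hg hz α Y).symm
      have e5 : dder Y (pairF α X) y = dder Y a y :=
        dder_congr_nhds hU hy fun z hz => (gV_sharp_at hg hz α X).symm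
      rw [e1, e2, ← e3, e4, e5]
    rw [hS, hB]
    ring
  -- expand the curvature term
  have step0 : gV g (Rcurv g X Y Y) X x
      = gV g (covV g X (covV g Y Y)) X x - gV g (covV g Y (covV g X Y)) X x
        - gV g (covV g Bv Y) X x := by
    unfold RG.Rcurv
    exact gV_sub3_left g _ _ _ X x
  -- term A
  have hcovYYs : ∀ i, SmAt (fun y => covV g Y Y y i) x :=
    fun i => smAt_covV hU hg hx (hYs x hx) (hYs x hx) i
  have hcovXYs : ∀ i, SmAt (fun y => covV g X Y y i) x :=
    fun i => smAt_covV hU hg hx (hXs x hx) (hYs x hx) i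
  have cA := compat hU hg hx (Z := X) (V := covV g Y Y) (W := X)
    (fun i => (hcovYYs i).diff) (fun i => (hXs x hx i).diff)
  have dA : dder X (gV g (covV g Y Y) X) x = (1/2) * dder X (dder X b) x := by
    rw [dder_congr_nhds hU hx (fun y hy => P1 y hy)]
    exact dder_const_mul (((hbs x hx).dder (hXs x hx)).diff)
  have eA : gV g (covV g Y Y) (covV g X X) x
      = (1/4) * gF g (dF a) (dF b) x := by
    rw [gV_eval_halves (V1 x hx) (V4 x hx)]
    simp only [ip_zero_left, ip_zero_right]
    rw [show ip g x (sharp g (dF b) x) (sharp g (dF a) x)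
      = gF g (dF b) (dF a) x from gV_sharp_sharp_at hg hx (dF b) (dF a)]
    rw [gF_symm_at hg hx (dF b) (dF a)]
    ring
  -- term B
  have cB := compat hU hg hx (Z := Y) (V := covV g X Y) (W := X)
    (fun i => (hcovXYs i).diff) (fun i => (hXs x hx i).diff)
  have dB : dder Y (gV g (covV g X Y) X) x
      = dder Y (dder X f) x - (1/2) * dder Y (dder Y a) x := by
    rw [dder_congr_nhds hU hx (fun y hy => P2 y hy)]
    rw [dder_sub (((hfs x hx).dder (hXs x hx)).diff)
      (((contDiffAt_const (c := (1/2:ℝ))).mul ((has x hx).dder (hYs x hx))).differentiableAt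
        (by simp))]
    rw [dder_const_mul (((has x hx).dder (hYs x hx)).diff)]
  have eB : gV g (covV g X Y) (covV g Y X) x
      = (1/4) * gF g (dF f) (dF f) x - (1/4) * gV g Bv Bv x := by
    rw [gV_eval_halves (V2 x hx) (V3 x hx)]
    rw [ip_neg_right, ip_neg_right]
    rw [show ip g x (sharp g (dF f) x) (sharp g (dF f) x)
      = gF g (dF f) (dF f) x from gV_sharp_sharp_at hg hx (dF f) (dF f)]
    have hsb : ip g x (Bv x) (sharp g (dF f) x)
        = ip g x (sharp g (dF f) x) (Bv x) := ip_symm_at hg hx _ _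
    rw [hsb]
    rw [show ip g x (Bv x) (Bv x) = gV g Bv Bv x from rfl]
    ring
  -- term C
  have cC : gV g (covV g Bv Y) X x = gV g (covV g X Y) Bv x :=
    nabla_sharp_symm hU hg hx hβ hcβ hBs (hXs x hx)
  have eC : gV g (covV g X Y) Bv x
      = (1/2) * (dder X (dder Y f) x - dder Y (dder X f) x)
        + (1/2) * gV g Bv Bv x := by
    rw [gV_eval_halves (V2 x hx)
      (fun k => show Bv x k = (1/2) * (Bv x k + Bv x k) from by ring)]
    have hSB : ip g x (sharp g (dF f) x) (Bv x)
        = dder X (dder Y f) x - dder Y (dder X f) x := by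
      rw [show ip g x (sharp g (dF f) x) (Bv x) = pairF (dF f) Bv x from
        gV_sharp_at hg hx (dF f) Bv, pairF_dF]
      exact (dder_comm (hfs x hx) (hXs x hx) (hYs x hx)).symm
    rw [hSB]
    rw [show ip g x (Bv x) (Bv x) = gV g Bv Bv x from rfl]
    ring
  rw [step0]
  have TA : gV g (covV g X (covV g Y Y)) X x
      = (1/2) * dder X (dder X b) x - (1/4) * gF g (dF a) (dF b) x := by
    linarith [cA, dA, eA]
  have TB : gV g (covV g Y (covV g X Y)) X x
      = dder Y (dder X f) x - (1/2) * dder Y (dder Y a) x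
        - ((1/4) * gF g (dF f) (dF f) x - (1/4) * gV g Bv Bv x) := by
    linarith [cB, dB, eB]
  have TC : gV g (covV g Bv Y) X x
      = (1/2) * (dder X (dder Y f) x - dder Y (dder X f) x)
        + (1/2) * gV g Bv Bv x := by rw [cC]; exact eC
  rw [TA, TB, TC]
  ring

end RG


/-! ### Part B1: pointwise linear algebra for submersions -/

namespace RG

variable {n : ℕ}

/-- `ip g x (α♯) w = Σ α_j w_j`. -/
lemma ip_sharp_pair {U : Set (Pt n)} {g : Met n} (hg : IsRiemannOn U g)
    {x : Pt n} (hx : x ∈ U) (cf : OneForm n) (w : Fin n → ℝ) :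
    ip g x (sharp g cf x) w = ∑ j, cf x j * w j := by
  unfold RG.ip
  rw [Finset.sum_comm]
  refine Finset.sum_congr rfl fun j _ => ?_
  rw [show ∑ i, g x i j * sharp g cf x i * w j
    = (∑ i, g x i j * sharp g cf x i) * w j from by rw [Finset.sum_mul]]
  rw [flat_sharp_at hg hx cf j]

lemma ip_add_add (g : Met n) (x : Pt n) (h v : Fin n → ℝ) :
    ip g x (h + v) (h + v)
      = ip g x h h + ip g x h v + ip g x v h + ip g x v v := by
  unfold RG.ip
  simp only [Pi.add_apply]
  rw [Finset.sum_congr rfl fun i (_ : i ∈ Finset.univ) => Finset.sum_congr rfl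
    fun j (_ : j ∈ Finset.univ) => show g x i j * (h i + v i) * (h j + v j)
      = g x i j * h i * h j + g x i j * h i * v j
        + (g x i j * v i * h j + g x i j * v i * v j) from by ring]
  simp only [Finset.sum_add_distrib]
  ring

lemma ip_self_pos {U : Set (Pt n)} {g : Met n} (hg : IsRiemannOn U g)
    {x : Pt n} (hx : x ∈ U) {u : Fin n → ℝ} (hu : u ≠ 0) : 0 < ip g x u u := by
  have h2 := (hg.2 x hx).2.dotProduct_mulVec_pos hu
  have : dotProduct u ((g x).mulVec u) = ip g x u u := by
    unfold RG.ip
    simp only [dotProduct, Matrix.mulVec, Finset.mul_sum]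
    exact Finset.sum_congr rfl fun i _ => Finset.sum_congr rfl fun j _ => by ring
  rw [← this]
  simpa using h2

lemma ip_self_eq_zero {U : Set (Pt n)} {g : Met n} (hg : IsRiemannOn U g)
    {x : Pt n} (hx : x ∈ U) {u : Fin n → ℝ} (hu : ip g x u u = 0) : u = 0 := by
  by_contra hne
  exact absurd hu (ne_of_gt (ip_self_pos hg hx hne))

end RG

namespace RG

variable {m nb : ℕ}

/-- Existence of the horizontal/vertical decomposition. -/
lemma exists_hor_vert {U : Set (Pt m)} {gE : Met m} (hg : IsRiemannOn U gE)
    {x : Pt m} (hx : x ∈ U) (p : Pt m → Pt nb) (w : Fin m → ℝ) :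
    ∃ h v, IsHor gE p x h ∧ IsVert p x v ∧ w = h + v := by
  set B : LinearMap.BilinForm ℝ (Fin m → ℝ) := Matrix.toBilin' (gE x) with hBdef
  have hBapp : ∀ u w : Fin m → ℝ, B u w = ip gE x u w := by
    intro u w
    rw [hBdef, Matrix.toBilin'_apply']
    unfold RG.ip
    simp only [dotProduct, Matrix.mulVec, Finset.mul_sum]
    exact Finset.sum_congr rfl fun i _ => Finset.sum_congr rfl fun j _ => by ring
  have hrefl : B.IsRefl := by
    intro u w huw
    rw [hBapp] at huw ⊢
    rw [ip_symm_at hg hx]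
    exact huw
  set W : Submodule ℝ (Fin m → ℝ) := LinearMap.ker (fderiv ℝ p x).toLinearMap with hWdef
  have hnd : (B.restrict W).Nondegenerate := by
    refine (hrefl.domRestrict W).nondegenerate_iff_separatingLeft.2 ?_
    intro u hu
    have h0 := hu u
    simp only [LinearMap.BilinForm.restrict_apply, LinearMap.domRestrict_apply, LinearMap.domRestrict₁₂_apply] at h0
    rw [hBapp] at h0
    have := ip_self_eq_zero hg hx h0
    exact Subtype.ext this
  have hcompl :=
    (LinearMap.BilinForm.restrict_nondegenerate_iff_isCompl_orthogonal hrefl).1 hnd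
  have hw : w ∈ W ⊔ B.orthogonal W := by
    rw [hcompl.sup_eq_top]; trivial
  obtain ⟨v, hvW, h, hhO, hsum⟩ := Submodule.mem_sup.1 hw
  refine ⟨h, v, ?_, LinearMap.mem_ker.1 hvW, by rw [← hsum]; abel⟩
  intro w' hw'
  have : B w' h = 0 :=
    (LinearMap.BilinForm.mem_orthogonal_iff.1 hhO) w' (LinearMap.mem_ker.2 hw')
  have h2 : B h w' = 0 := hrefl _ _ this
  rw [hBapp] at h2
  exact h2

end RG


/-! ### Part B2: pullbacks along the submersion -/

namespace RG

lemma ip_sub_left {n : ℕ} (g : Met n) (x : Pt n) (a b w : Fin n → ℝ) :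
    ip g x (a - b) w = ip g x a w - ip g x b w := by
  unfold RG.ip
  rw [← Finset.sum_sub_distrib]
  refine Finset.sum_congr rfl fun i _ => ?_
  rw [← Finset.sum_sub_distrib]
  refine Finset.sum_congr rfl fun j _ => ?_
  simp only [Pi.sub_apply]
  ring

lemma pd_pd_symm {n : ℕ} {h : Pt n → ℝ} {x : Pt n} (hh : SmAt h x) (i j : Fin n) :
    pd i (pd j h) x = pd j (pd i h) x := by
  have hb : bracket (fun _ : Pt n => Pi.single i (1:ℝ)) (fun _ => Pi.single j (1:ℝ))
      = fun _ _ => 0 := by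
    funext y k
    unfold RG.bracket
    simp
  have hc := dder_comm (X := fun _ : Pt n => Pi.single i (1:ℝ))
    (Y := fun _ => Pi.single j (1:ℝ)) hh (fun _ => contDiffAt_const)
    (fun _ => contDiffAt_const)
  rw [hb] at hc
  have h0 : dder (n := n) (fun _ _ => 0) h x = 0 := by
    unfold RG.dder
    exact (fderiv ℝ h x).map_zero
  rw [h0] at hc
  have e1 : dder (fun _ : Pt n => Pi.single i (1:ℝ)) (dder (fun _ => Pi.single j (1:ℝ)) h) x
      = pd i (pd j h) x := rfl
  have e2 : dder (fun _ : Pt n => Pi.single j (1:ℝ)) (dder (fun _ => Pi.single i (1:ℝ)) h) x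
      = pd j (pd i h) x := rfl
  rw [e1, e2] at hc
  linarith

variable {m nb : ℕ}

lemma fderiv_apply_pi' {Y : Pt m → Pt nb} {x : Pt m} {v : Pt m}
    (hY : ∀ i, DifferentiableAt ℝ (fun y => Y y i) x) (i : Fin nb) :
    fderiv ℝ Y x v i = fderiv ℝ (fun y => Y y i) x v := by
  rw [fderiv_pi hY]; rfl

/-- Pairing of a pulled-back covector with a vector. -/
lemma pbCov_pair {x : Pt m} {p : Pt m → Pt nb}
    (hpd : ∀ j, DifferentiableAt ℝ (fun y => p y j) x) (ξ : Fin nb → ℝ)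
    (w : Fin m → ℝ) :
    ∑ i, pbCov p x ξ i * w i = ∑ j, ξ j * fderiv ℝ p x w j := by
  unfold RG.pbCov
  rw [Finset.sum_congr rfl fun i (_ : i ∈ Finset.univ) => Finset.sum_mul ..]
  rw [Finset.sum_comm]
  refine Finset.sum_congr rfl fun j _ => ?_
  have hinner : fderiv ℝ (fun y => p y j) x w = ∑ i, w i * pd i (fun y => p y j) x :=
    dder_eq_sum_pd (fun _ => w) (fun y => p y j) x
  rw [fderiv_apply_pi' hpd j, hinner, Finset.mul_sum]
  refine Finset.sum_congr rfl fun i _ => ?_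
  have hsing : (fderiv ℝ p x) (Pi.single i 1) j = pd i (fun y => p y j) x := by
    rw [fderiv_apply_pi' hpd j]; rfl
  rw [hsing]
  ring

lemma pbCov_vert {x : Pt m} {p : Pt m → Pt nb}
    (hpd : ∀ j, DifferentiableAt ℝ (fun y => p y j) x) (ξ : Fin nb → ℝ)
    {v : Fin m → ℝ} (hv : IsVert p x v) :
    ∑ i, pbCov p x ξ i * v i = 0 := by
  rw [pbCov_pair hpd ξ v, hv]
  simp

/-- The sharp of a pulled-back covector is horizontal. -/
lemma sharpPb_hor {UE : Set (Pt m)} {gE : Met m} (hgE : IsRiemannOn UE gE)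
    {x : Pt m} (hx : x ∈ UE) {p : Pt m → Pt nb}
    (hpd : ∀ j, DifferentiableAt ℝ (fun y => p y j) x) (ξ : Fin nb → ℝ) :
    IsHor gE p x (sharp gE (fun _ => pbCov p x ξ) x) := by
  intro w hw
  rw [ip_sharp_pair hgE hx]
  exact pbCov_vert hpd ξ hw

/-- The sharp of a pulled-back covector projects to the sharp below. -/
lemma sharpPb_push {UE : Set (Pt m)} (hUE : IsOpen UE) {UB : Set (Pt nb)}
    {gE : Met m} {gB : Met nb} (hgE : IsRiemannOn UE gE) (hgB : IsRiemannOn UB gB)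
    {p : Pt m → Pt nb} (hp : Set.MapsTo p UE UB)
    (hsub : IsRiemSubmersionOn UE gE gB p) {x : Pt m} (hx : x ∈ UE) (ξ : Fin nb → ℝ) :
    fderiv ℝ p x (sharp gE (fun _ => pbCov p x ξ) x) = sharp gB (fun _ => ξ) (p x) := by
  have hpd : ∀ j, DifferentiableAt ℝ (fun y => p y j) x :=
    fun j => (smAt_of_on hUE (hsub.1 j) hx).diff
  set X0 : Fin m → ℝ := sharp gE (fun _ => pbCov p x ξ) x with hX0
  have hX0hor : IsHor gE p x X0 := sharpPb_hor hgE hx hpd ξ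
  have hiso := (hsub.2 x hx).2
  have key : ∀ h : Fin m → ℝ, IsHor gE p x h →
      ip gB (p x) (fderiv ℝ p x X0 - sharp gB (fun _ => ξ) (p x)) (fderiv ℝ p x h) = 0 := by
    intro h hh
    rw [ip_sub_left]
    rw [hiso X0 h hX0hor hh]
    rw [hX0, ip_sharp_pair hgE hx]
    rw [pbCov_pair hpd ξ h]
    rw [ip_sharp_pair hgB (hp hx)]
    simp
  have hzero : ip gB (p x) (fderiv ℝ p x X0 - sharp gB (fun _ => ξ) (p x))
      (fderiv ℝ p x X0 - sharp gB (fun _ => ξ) (p x)) = 0 := by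
    obtain ⟨w0, hw0⟩ := (hsub.2 x hx).1 (fderiv ℝ p x X0 - sharp gB (fun _ => ξ) (p x))
    have hw0' : fderiv ℝ p x w0 = fderiv ℝ p x X0 - sharp gB (fun _ => ξ) (p x) := hw0
    obtain ⟨h, v, hh, hv, hdec⟩ := exists_hor_vert hgE hx p w0
    have hph : fderiv ℝ p x w0 = fderiv ℝ p x h := by
      rw [hdec, map_add, hv, add_zero]
    rw [show fderiv ℝ p x X0 - sharp gB (fun _ => ξ) (p x) = fderiv ℝ p x h from by
      rw [← hph, hw0']] at key ⊢
    exact key h hh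
  have := ip_self_eq_zero hgB (hp hx) hzero
  rwa [sub_eq_zero] at this

/-- Pullback of the co-metric. -/
lemma cometric_pb {UE : Set (Pt m)} (hUE : IsOpen UE) {UB : Set (Pt nb)}
    {gE : Met m} {gB : Met nb} (hgE : IsRiemannOn UE gE) (hgB : IsRiemannOn UB gB)
    {p : Pt m → Pt nb} (hp : Set.MapsTo p UE UB)
    (hsub : IsRiemSubmersionOn UE gE gB p) {x : Pt m} (hx : x ∈ UE)
    (ξ η : Fin nb → ℝ) :
    gF gE (fun _ => pbCov p x ξ) (fun _ => pbCov p x η) x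
      = gF gB (fun _ => ξ) (fun _ => η) (p x) := by
  have hpd : ∀ j, DifferentiableAt ℝ (fun y => p y j) x :=
    fun j => (smAt_of_on hUE (hsub.1 j) hx).diff
  rw [← gV_sharp_sharp_at hgE hx, ← gV_sharp_sharp_at hgB (hp hx)]
  have hiso := (hsub.2 x hx).2
  have e1 : gV gE (sharp gE (fun _ => pbCov p x ξ)) (sharp gE (fun _ => pbCov p x η)) x
      = ip gE x (sharp gE (fun _ => pbCov p x ξ) x) (sharp gE (fun _ => pbCov p x η) x) :=
    rfl
  rw [e1, ← hiso _ _ (sharpPb_hor hgE hx hpd ξ) (sharpPb_hor hgE hx hpd η)]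
  rw [sharpPb_push hUE hgE hgB hp hsub hx ξ, sharpPb_push hUE hgE hgB hp hsub hx η]
  rfl

end RG


/-! ### Part B3: chain rules, pullback forms -/

namespace RG

variable {m nb : ℕ}

lemma dder_comp {c : Pt nb → ℝ} {p : Pt m → Pt nb} {x : Pt m}
    (hc : DifferentiableAt ℝ c (p x)) (hpd : DifferentiableAt ℝ p x) (W : VF m) :
    dder W (fun y => c (p y)) x = fderiv ℝ c (p x) (fderiv ℝ p x (W x)) := by
  unfold RG.dder
  rw [show (fun y => c (p y)) = c ∘ p from rfl, fderiv_comp x hc hpd]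
  rfl

lemma pd_comp {c : Pt nb → ℝ} {p : Pt m → Pt nb} {x : Pt m}
    (hc : DifferentiableAt ℝ c (p x)) (hpd : DifferentiableAt ℝ p x) (i : Fin m) :
    pd i (fun y => c (p y)) x
      = ∑ j, pd j c (p x) * fderiv ℝ p x (Pi.single i 1) j := by
  have h1 : pd i (fun y => c (p y)) x
      = fderiv ℝ c (p x) (fderiv ℝ p x (Pi.single i 1)) :=
    dder_comp hc hpd (fun _ => Pi.single i 1)
  have h2 : fderiv ℝ c (p x) (fderiv ℝ p x (Pi.single i 1))
      = ∑ j, fderiv ℝ p x (Pi.single i 1) j * pd j c (p x) :=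
    dder_eq_sum_pd (fun _ => fderiv ℝ p x (Pi.single i 1)) c (p x)
  rw [h1, h2]
  exact Finset.sum_congr rfl fun j _ => by ring

lemma pbF_smooth {UE : Set (Pt m)} (hUE : IsOpen UE) {UB : Set (Pt nb)}
    (hUB : IsOpen UB) {p : Pt m → Pt nb}
    (hps : ∀ i, ContDiffOn ℝ (⊤ : ℕ∞) (fun x => p x i) UE) (hp : Set.MapsTo p UE UB)
    {α : OneForm nb} (hα : SmoothSec UB α) : SmoothSec UE (pbF p α) := by
  intro i x hx
  apply ContDiffAt.contDiffWithinAt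
  have hpcd : ContDiffAt ℝ (⊤ : ℕ∞) p x := contDiffAt_pi.2 fun j => smAt_of_on hUE (hps j) hx
  have hD : ∀ j, SmAt (fun y => fderiv ℝ p y (Pi.single i 1) j) x := by
    intro j
    exact contDiffAt_pi.1 ((hpcd.fderiv_right (by simp)).clm_apply contDiffAt_const) j
  unfold RG.pbF
  exact ContDiffAt.sum fun j _ =>
    ContDiffAt.mul ((smAt_of_on hUB (hα j) (hp hx)).comp x hpcd) (hD j)

lemma pbF_closed {UE : Set (Pt m)} (hUE : IsOpen UE) {UB : Set (Pt nb)}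
    (hUB : IsOpen UB) {p : Pt m → Pt nb}
    (hps : ∀ i, ContDiffOn ℝ (⊤ : ℕ∞) (fun x => p x i) UE) (hp : Set.MapsTo p UE UB)
    {α : OneForm nb} (hα : SmoothSec UB α) (hcα : IsClosedOn UB α) :
    IsClosedOn UE (pbF p α) := by
  intro x hx i j
  have hpcd : ContDiffAt ℝ (⊤ : ℕ∞) p x := contDiffAt_pi.2 fun r => smAt_of_on hUE (hps r) hx
  have hpd : ∀ r, DifferentiableAt ℝ (fun y => p y r) x :=
    fun r => (smAt_of_on hUE (hps r) hx).diff
  have hD : ∀ (a : Fin m) (s : Fin nb),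
      SmAt (fun y => fderiv ℝ p y (Pi.single a 1) s) x := fun a s =>
    contDiffAt_pi.1 ((hpcd.fderiv_right (by simp)).clm_apply contDiffAt_const) s
  have hαc : ∀ s, SmAt (fun y => α (p y) s) x :=
    fun s => (smAt_of_on hUB (hα s) (hp hx)).comp x hpcd
  have expand : ∀ (a b : Fin m), pd a (fun y => pbF p α y b) x
      = ∑ s, (pd a (fun y => α (p y) s) x * fderiv ℝ p x (Pi.single b 1) s
          + α (p x) s * pd a (fun y => fderiv ℝ p y (Pi.single b 1) s) x) := by
    intro a b
    have h1 : pd a (fun y => pbF p α y b) x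
        = dder (fun _ => Pi.single a (1:ℝ)) (fun y =>
            ∑ s, α (p y) s * fderiv ℝ p y (Pi.single b 1) s) x := rfl
    rw [h1, dder_sum (fun s _ => (hαc s).diff.fun_mul (hD b s).diff)]
    refine Finset.sum_congr rfl fun s _ => ?_
    rw [dder_mul (hαc s).diff (hD b s).diff]
    ring_nf
    rfl
  rw [expand i j, expand j i]
  simp only [Finset.sum_add_distrib]
  congr 1
  · -- first-derivative part
    have hch : ∀ (a : Fin m) (s : Fin nb), pd a (fun y => α (p y) s) x
        = ∑ t, pd t (fun z => α z s) (p x) * fderiv ℝ p x (Pi.single a 1) t :=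
      fun a s => pd_comp (smAt_of_on hUB (hα s) (hp hx)).diff (hpcd.differentiableAt (by simp)) a
    simp only [hch]
    simp only [Finset.sum_mul]
    rw [Finset.sum_comm]
    refine Finset.sum_congr rfl fun s _ => Finset.sum_congr rfl fun t _ => ?_
    rw [hcα (p x) (hp hx) s t]
    ring
  · -- second-derivative part
    refine Finset.sum_congr rfl fun s _ => ?_
    congr 1
    have hDfun : ∀ (a : Fin m), ∀ y ∈ UE, fderiv ℝ p y (Pi.single a 1) s
        = pd a (fun z => p z s) y := by
      intro a y hy
      exact fderiv_apply_pi' (fun r => (smAt_of_on hUE (hps r) hy).diff) s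
    calc pd i (fun y => fderiv ℝ p y (Pi.single j 1) s) x
        = pd i (pd j (fun z => p z s)) x := pd_congr_nhds hUE hx (hDfun j)
      _ = pd j (pd i (fun z => p z s)) x :=
          pd_pd_symm (smAt_of_on hUE (hps s) hx) i j
      _ = pd j (fun y => fderiv ℝ p y (Pi.single i 1) s) x :=
          (pd_congr_nhds hUE hx (hDfun i)).symm

/-- The bracket of the pulled-back sharps is `p`-related to the bracket below. -/
lemma bracket_push {UE : Set (Pt m)} (hUE : IsOpen UE) {UB : Set (Pt nb)}
    (hUB : IsOpen UB) {gE : Met m} {gB : Met nb}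
    (hgE : IsRiemannOn UE gE) (hgB : IsRiemannOn UB gB)
    {p : Pt m → Pt nb} (hp : Set.MapsTo p UE UB)
    (hsub : IsRiemSubmersionOn UE gE gB p)
    {α β : OneForm nb} (hα : SmoothSec UB α) (hβ : SmoothSec UB β)
    {x : Pt m} (hx : x ∈ UE) (k : Fin nb) :
    fderiv ℝ p x (bracket (sharp gE (pbF p α)) (sharp gE (pbF p β)) x) k
      = bracket (sharp gB α) (sharp gB β) (p x) k := by
  have hpd : ∀ y ∈ UE, ∀ r, DifferentiableAt ℝ (fun z => p z r) y :=
    fun y hy r => (smAt_of_on hUE (hsub.1 r) hy).diff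
  have hXt : ∀ y ∈ UE, ∀ i, SmAt (fun z => sharp gE (pbF p α) z i) y :=
    fun y hy => smAt_sharp hUE hgE hy (pbF_smooth hUE hUB hsub.1 hp hα)
  have hYt : ∀ y ∈ UE, ∀ i, SmAt (fun z => sharp gE (pbF p β) z i) y :=
    fun y hy => smAt_sharp hUE hgE hy (pbF_smooth hUE hUB hsub.1 hp hβ)
  have hrelX : ∀ y ∈ UE, fderiv ℝ p y (sharp gE (pbF p α) y) = sharp gB α (p y) :=
    fun y hy => sharpPb_push hUE hgE hgB hp hsub hy (α (p y))
  have hrelY : ∀ y ∈ UE, fderiv ℝ p y (sharp gE (pbF p β) y) = sharp gB β (p y) :=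
    fun y hy => sharpPb_push hUE hgE hgB hp hsub hy (β (p y))
  have hcompY : ∀ y ∈ UE, dder (sharp gE (pbF p β)) (fun z => p z k) y
      = sharp gB β (p y) k := by
    intro y hy
    have h1 : dder (sharp gE (pbF p β)) (fun z => p z k) y
        = fderiv ℝ p y (sharp gE (pbF p β) y) k :=
      (fderiv_apply_pi' (hpd y hy) k).symm
    rw [h1, hrelY y hy]
  have hcompX : ∀ y ∈ UE, dder (sharp gE (pbF p α)) (fun z => p z k) y
      = sharp gB α (p y) k := by
    intro y hy
    have h1 : dder (sharp gE (pbF p α)) (fun z => p z k) y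
        = fderiv ℝ p y (sharp gE (pbF p α) y) k :=
      (fderiv_apply_pi' (hpd y hy) k).symm
    rw [h1, hrelX y hy]
  have h0 : fderiv ℝ p x (bracket (sharp gE (pbF p α)) (sharp gE (pbF p β)) x) k
      = dder (bracket (sharp gE (pbF p α)) (sharp gE (pbF p β))) (fun z => p z k) x :=
    fderiv_apply_pi' (hpd x hx) k
  rw [h0]
  rw [← dder_comm (smAt_of_on hUE (hsub.1 k) hx) (hXt x hx) (hYt x hx)]
  rw [dder_congr_nhds hUE hx (fun y hy => hcompY y hy),
    dder_congr_nhds hUE hx (fun y hy => hcompX y hy)]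
  rw [dder_comp (smAt_sharp hUB hgB (hp hx) hβ k).diff
    ((contDiffAt_pi.2 fun r => smAt_of_on hUE (hsub.1 r) hx).differentiableAt (by simp))
    (sharp gE (pbF p α))]
  rw [dder_comp (smAt_sharp hUB hgB (hp hx) hα k).diff
    ((contDiffAt_pi.2 fun r => smAt_of_on hUE (hsub.1 r) hx).differentiableAt (by simp))
    (sharp gE (pbF p β))]
  rw [hrelX x hx, hrelY x hx]
  rfl

end RG


/-! ### Part B4: transfer of the scalar terms -/

namespace RG

variable {m nb : ℕ}

lemma gF_congr_pt {n : ℕ} {g : Met n} {x : Pt n} {γ γ1 δ δ1 : OneForm n}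
    (h1 : ∀ i, γ x i = γ1 x i) (h2 : ∀ j, δ x j = δ1 x j) :
    gF g γ δ x = gF g γ1 δ1 x := by
  unfold RG.gF
  exact Finset.sum_congr rfl fun i _ => Finset.sum_congr rfl fun j _ => by
    rw [h1 i, h2 j]

section Transfer

variable {UE : Set (Pt m)} (hUE : IsOpen UE) {UB : Set (Pt nb)} (hUB : IsOpen UB)
  {gE : Met m} {gB : Met nb} (hgE : IsRiemannOn UE gE) (hgB : IsRiemannOn UB gB)
  {p : Pt m → Pt nb} (hp : Set.MapsTo p UE UB) (hsub : IsRiemSubmersionOn UE gE gB p)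

include hUE hUB hgE hgB hp hsub

lemma pull_gV {γ δ : OneForm nb} (hγ : SmoothSec UB γ) (hδ : SmoothSec UB δ)
    {y : Pt m} (hy : y ∈ UE) :
    gV gE (sharp gE (pbF p γ)) (sharp gE (pbF p δ)) y
      = gV gB (sharp gB γ) (sharp gB δ) (p y) := by
  rw [gV_sharp_sharp_at hgE hy, gV_sharp_sharp_at hgB (hp hy)]
  exact cometric_pb hUE hgE hgB hp hsub hy (γ (p y)) (δ (p y))

lemma pull_second {γ δ ε ζ : OneForm nb} (hγ : SmoothSec UB γ) (hδ : SmoothSec UB δ)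
    (hε : SmoothSec UB ε) (hζ : SmoothSec UB ζ) {x : Pt m} (hx : x ∈ UE) :
    dder (sharp gE (pbF p γ)) (dder (sharp gE (pbF p δ))
        (gV gE (sharp gE (pbF p ε)) (sharp gE (pbF p ζ)))) x
      = dder (sharp gB γ) (dder (sharp gB δ)
          (gV gB (sharp gB ε) (sharp gB ζ))) (p x) := by
  have hpdy : ∀ y ∈ UE, DifferentiableAt ℝ p y := fun y hy =>
    (contDiffAt_pi.2 fun r => smAt_of_on hUE (hsub.1 r) hy).differentiableAt (by simp)
  have hrelδ : ∀ y ∈ UE, fderiv ℝ p y (sharp gE (pbF p δ) y) = sharp gB δ (p y) :=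
    fun y hy => sharpPb_push hUE hgE hgB hp hsub hy (δ (p y))
  have hrelγ : ∀ y ∈ UE, fderiv ℝ p y (sharp gE (pbF p γ) y) = sharp gB γ (p y) :=
    fun y hy => sharpPb_push hUE hgE hgB hp hsub hy (γ (p y))
  have hc : ∀ z ∈ UB, SmAt (gV gB (sharp gB ε) (sharp gB ζ)) z := fun z hz =>
    smAt_gV hUB hgB hz (smAt_sharp hUB hgB hz hε) (smAt_sharp hUB hgB hz hζ)
  have hfab : ∀ y ∈ UE, gV gE (sharp gE (pbF p ε)) (sharp gE (pbF p ζ)) y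
      = gV gB (sharp gB ε) (sharp gB ζ) (p y) := fun y hy =>
    pull_gV hUE hUB hgE hgB hp hsub hε hζ hy
  have step1 : ∀ y ∈ UE,
      dder (sharp gE (pbF p δ)) (gV gE (sharp gE (pbF p ε)) (sharp gE (pbF p ζ))) y
        = dder (sharp gB δ) (gV gB (sharp gB ε) (sharp gB ζ)) (p y) := by
    intro y hy
    rw [dder_congr_nhds hUE hy hfab]
    rw [dder_comp (hc _ (hp hy)).diff (hpdy y hy)]
    rw [hrelδ y hy]
    rfl
  rw [dder_congr_nhds hUE hx step1]
  have hdd : DifferentiableAt ℝ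
      (dder (sharp gB δ) (gV gB (sharp gB ε) (sharp gB ζ))) (p x) :=
    ((hc (p x) (hp hx)).dder (smAt_sharp hUB hgB (hp hx) hδ)).diff
  rw [dder_comp hdd (hpdy x hx)]
  rw [hrelγ x hx]
  rfl

lemma pull_gFdd {γ δ ε ζ : OneForm nb} (hγ : SmoothSec UB γ) (hδ : SmoothSec UB δ)
    (hε : SmoothSec UB ε) (hζ : SmoothSec UB ζ) {x : Pt m} (hx : x ∈ UE) :
    gF gE (dF (gV gE (sharp gE (pbF p γ)) (sharp gE (pbF p δ))))
        (dF (gV gE (sharp gE (pbF p ε)) (sharp gE (pbF p ζ)))) x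
      = gF gB (dF (gV gB (sharp gB γ) (sharp gB δ)))
          (dF (gV gB (sharp gB ε) (sharp gB ζ))) (p x) := by
  have hpdx : DifferentiableAt ℝ p x :=
    (contDiffAt_pi.2 fun r => smAt_of_on hUE (hsub.1 r) hx).differentiableAt (by simp)
  have key : ∀ (ρ σ : OneForm nb), SmoothSec UB ρ → SmoothSec UB σ → ∀ i,
      dF (gV gE (sharp gE (pbF p ρ)) (sharp gE (pbF p σ))) x i
        = pbCov p x (fun j => pd j (gV gB (sharp gB ρ) (sharp gB σ)) (p x)) i := by
    intro ρ σ hρ hσ i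
    have hfab : ∀ y ∈ UE, gV gE (sharp gE (pbF p ρ)) (sharp gE (pbF p σ)) y
        = gV gB (sharp gB ρ) (sharp gB σ) (p y) := fun y hy =>
      pull_gV hUE hUB hgE hgB hp hsub hρ hσ hy
    have hda : DifferentiableAt ℝ (gV gB (sharp gB ρ) (sharp gB σ)) (p x) :=
      (smAt_gV hUB hgB (hp hx) (smAt_sharp hUB hgB (hp hx) hρ)
        (smAt_sharp hUB hgB (hp hx) hσ)).diff
    have h1 : dF (gV gE (sharp gE (pbF p ρ)) (sharp gE (pbF p σ))) x i
        = pd i (fun y => gV gB (sharp gB ρ) (sharp gB σ) (p y)) x :=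
      pd_congr_nhds hUE hx hfab
    rw [h1, pd_comp hda hpdx i]
    rfl
  rw [gF_congr_pt
    (γ1 := fun _ => pbCov p x (fun j => pd j (gV gB (sharp gB γ) (sharp gB δ)) (p x)))
    (δ1 := fun _ => pbCov p x (fun j => pd j (gV gB (sharp gB ε) (sharp gB ζ)) (p x)))
    (key γ δ hγ hδ) (key ε ζ hε hζ)]
  exact cometric_pb hUE hgE hgB hp hsub hx _ _

end Transfer

end RG

/-- **O'Neill's formula in covariant form**: for a Riemannian submersion
`p : (E,g_E) → (B,g_B)` and closed smooth 1-forms `α β` on `B`,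
`g_B(R^B(α♯,β♯)β♯,α♯) ∘ p
  = g_E(R^E((p*α)♯,(p*β)♯)(p*β)♯,(p*α)♯) + (3/4)‖[(p*α)♯,(p*β)♯]^{ver}‖²_{g_E}`.
The (unique) vertical part of the bracket is encoded by quantifying over
decompositions `[(p*α)♯,(p*β)♯](x) = h + v` with `h` horizontal, `v` vertical. -/
theorem oneill_covariant {m nb : ℕ}
    (UE : Set (Pt m)) (UB : Set (Pt nb)) (hUE : IsOpen UE) (hUB : IsOpen UB)
    (gE : Met m) (gB : Met nb) (hgE : IsRiemannOn UE gE) (hgB : IsRiemannOn UB gB)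
    (p : Pt m → Pt nb) (hp : Set.MapsTo p UE UB)
    (hsub : IsRiemSubmersionOn UE gE gB p)
    (α β : OneForm nb) (hα : SmoothSec UB α) (hβ : SmoothSec UB β)
    (hcα : IsClosedOn UB α) (hcβ : IsClosedOn UB β) :
    ∀ x ∈ UE, ∀ h v : Fin m → ℝ,
      IsHor gE p x h → IsVert p x v →
      h + v = bracket (sharp gE (pbF p α)) (sharp gE (pbF p β)) x →
      gV gB (Rcurv gB (sharp gB α) (sharp gB β) (sharp gB β)) (sharp gB α) (p x)
        = gV gE (Rcurv gE (sharp gE (pbF p α)) (sharp gE (pbF p β)) (sharp gE (pbF p β)))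
            (sharp gE (pbF p α)) x
          + (3/4) * ip gE x v v := by
  intro x hx h v hH hV hsum
  have hxB : p x ∈ UB := hp hx
  have hαE : SmoothSec UE (pbF p α) := pbF_smooth hUE hUB hsub.1 hp hα
  have hβE : SmoothSec UE (pbF p β) := pbF_smooth hUE hUB hsub.1 hp hβ
  have hcαE : IsClosedOn UE (pbF p α) := pbF_closed hUE hUB hsub.1 hp hα hcα
  have hcβE : IsClosedOn UE (pbF p β) := pbF_closed hUE hUB hsub.1 hp hβ hcβ
  have KB := star_identity hUB hgB hα hcα hβ hcβ hxB
  have KE := star_identity hUE hgE hαE hcαE hβE hcβE hx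
  have T1 := pull_second hUE hUB hgE hgB hp hsub hα hα hβ hβ hx
  have T2 := pull_second hUE hUB hgE hgB hp hsub hβ hβ hα hα hx
  have T3 := pull_second hUE hUB hgE hgB hp hsub hα hβ hα hβ hx
  have T4 := pull_second hUE hUB hgE hgB hp hsub hβ hα hα hβ hx
  have T5 := pull_gFdd hUE hUB hgE hgB hp hsub hα hα hβ hβ hx
  have T6 := pull_gFdd hUE hUB hgE hgB hp hsub hα hβ hα hβ hx
  -- the bracket term
  have hBx : bracket (sharp gE (pbF p α)) (sharp gE (pbF p β)) x = h + v := hsum.symm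
  have TB : gV gE (bracket (sharp gE (pbF p α)) (sharp gE (pbF p β)))
      (bracket (sharp gE (pbF p α)) (sharp gE (pbF p β))) x
      = gV gB (bracket (sharp gB α) (sharp gB β))
          (bracket (sharp gB α) (sharp gB β)) (p x) + ip gE x v v := by
    have e0 : gV gE (bracket (sharp gE (pbF p α)) (sharp gE (pbF p β)))
        (bracket (sharp gE (pbF p α)) (sharp gE (pbF p β))) x
        = ip gE x (h + v) (h + v) := by
      show ip gE x (bracket (sharp gE (pbF p α)) (sharp gE (pbF p β)) x)
        (bracket (sharp gE (pbF p α)) (sharp gE (pbF p β)) x) = _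
      rw [hBx]
    have hdph : fderiv ℝ p x h = bracket (sharp gB α) (sharp gB β) (p x) := by
      have h1 : fderiv ℝ p x (h + v) = fderiv ℝ p x h := by
        rw [map_add, hV, add_zero]
      have h2 := congrArg (fderiv ℝ p x) hBx
      funext k
      rw [← h1, ← h2]
      exact bracket_push hUE hUB hgE hgB hp hsub hα hβ hx k
    have hiph : ip gE x h h = gV gB (bracket (sharp gB α) (sharp gB β))
        (bracket (sharp gB α) (sharp gB β)) (p x) := by
      rw [← (hsub.2 x hx).2 h h hH hH, hdph]
      rfl
    have hv0 : ip gE x h v = 0 := hH v hV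
    have vh0 : ip gE x v h = 0 := by
      rw [ip_symm_at hgE hx]; exact hv0
    rw [e0, ip_add_add, hv0, vh0, hiph]
    ring
  rw [KB, KE, T1, T2, T3, T4, T5, T6, TB]
  ring
end
end

section
/- Fix x ∈ M, let α, β be closed smooth 1-forms on M, and suppose X_α, X_β are smooth vector fields near x with X_α(x) = α♯(x), X_β(x) = β♯(x), L_{X_α}α = L_{X_α}β = L_{X_β}α = L_{X_β}β = 0 and [X_α,X_β] = 0. Then the Lie bracket at x is expressed through the stresses: [α♯, β♯](x) = D_x(β♯ − X_β).X_α(x) − D_x(α♯ − X_α).X_β(x), where for a vector field Z vanishing at x, D_x Z ∈ Hom(T_xM, T_xM) denotes its (chart-independent) derivative at x, characterized by D_x Z . Y_x = [Y, Z](x) for any vector field Y. -/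
/-!
Local-coordinate (chart) model of a Riemannian manifold: points are elements
of `ℝⁿ`, vector fields and 1-forms are given by their component functions on
an open set `U`, and the metric by its matrix of components.
-/

noncomputable section

section Aux
open Matrix

private lemma diffAt_det' {m : Type*} [Fintype m] [DecidableEq m] {E : Type*}
    [NormedAddCommGroup E] [NormedSpace ℝ E] {M : E → Matrix m m ℝ} {x : E}
    (h : ∀ i j, DifferentiableAt ℝ (fun y => M y i j) x) :
    DifferentiableAt ℝ (fun y => (M y).det) x := by
  simp only [Matrix.det_apply']
  refine DifferentiableAt.fun_sum fun σ _ => (differentiableAt_const _).fun_mul ?_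
  exact (HasFDerivAt.finset_prod (u := Finset.univ) (g := fun i y => M y (σ i) i)
    (fun i _ => (h (σ i) i).hasFDerivAt)).differentiableAt

private lemma diffAt_adjugate' {m : Type*} [Fintype m] [DecidableEq m] {E : Type*}
    [NormedAddCommGroup E] [NormedSpace ℝ E] {M : E → Matrix m m ℝ} {x : E}
    (h : ∀ i j, DifferentiableAt ℝ (fun y => M y i j) x) (i j : m) :
    DifferentiableAt ℝ (fun y => (M y).adjugate i j) x := by
  simp only [Matrix.adjugate_apply]
  apply diffAt_det'
  intro k l
  simp only [Matrix.updateRow_apply]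
  by_cases hk : k = j <;> simp [hk, h]

private lemma diffAt_inv_entry' {m : Type*} [Fintype m] [DecidableEq m] {E : Type*}
    [NormedAddCommGroup E] [NormedSpace ℝ E] {M : E → Matrix m m ℝ} {x : E}
    (h : ∀ i j, DifferentiableAt ℝ (fun y => M y i j) x)
    (hdet : (M x).det ≠ 0) (i j : m) :
    DifferentiableAt ℝ (fun y => (M y)⁻¹ i j) x := by
  have : (fun y => (M y)⁻¹ i j) = fun y => ((M y).det)⁻¹ * (M y).adjugate i j := by
    funext y
    rw [Matrix.inv_def, Matrix.smul_apply, Ring.inverse_eq_inv', smul_eq_mul]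
  rw [this]
  exact ((diffAt_det' h).inv hdet).mul (diffAt_adjugate' h i j)

end Aux

open RG


/-- The Lie bracket `[α♯,β♯]` at `x` expressed through the stresses: with
`X_α, X_β` locally constant extensions of `α♯(x)`, `β♯(x)` (i.e. satisfying
(1) `X_α(x)=α♯(x)`, `X_β(x)=β♯(x)`, (3) vanishing Lie derivatives and
(4) `[X_α,X_β]=0`),
`[α♯,β♯](x) = D_x(β♯ − X_β).X_α(x) − D_x(α♯ − X_α).X_β(x)`,
where for a vector field `Z` vanishing at `x` its chart-independent derivative
`D_x Z` is, in the chart, the ordinary derivative `fderiv`. -/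
theorem bracket_via_stress {n : ℕ} (U : Set (Pt n)) (hU : IsOpen U)
    (g : Met n) (hg : IsRiemannOn U g)
    (α β : OneForm n) (hα : SmoothSec U α) (hβ : SmoothSec U β)
    (hcα : IsClosedOn U α) (hcβ : IsClosedOn U β)
    (x : Pt n) (hx : x ∈ U)
    (Xa Xb : VF n) (V : Set (Pt n)) (hV : IsOpen V) (hxV : x ∈ V) (hVU : V ⊆ U)
    (hXa : SmoothSec V Xa) (hXb : SmoothSec V Xb)
    (h1a : Xa x = sharp g α x) (h1b : Xb x = sharp g β x)
    (h3aa : ∀ y ∈ V, lieF Xa α y = 0) (h3ab : ∀ y ∈ V, lieF Xa β y = 0)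
    (h3ba : ∀ y ∈ V, lieF Xb α y = 0) (h3bb : ∀ y ∈ V, lieF Xb β y = 0)
    (h4 : ∀ y ∈ V, bracket Xa Xb y = 0) :
    bracket (sharp g α) (sharp g β) x =
      fderiv ℝ (fun y => (sharp g β y - Xb y : Fin n → ℝ)) x (Xa x)
      - fderiv ℝ (fun y => (sharp g α y - Xa y : Fin n → ℝ)) x (Xb x) := by
  -- differentiability of the metric entries at x
  have hgx : ∀ i j, DifferentiableAt ℝ (fun y => g y i j) x := fun i j =>
    ((hg.1 i j).contDiffAt (hU.mem_nhds hx)).differentiableAt (by simp)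
  have hdet : (g x).det ≠ 0 := (hg.2 x hx).2.det_pos.ne'
  have hginv : ∀ i k, DifferentiableAt ℝ (fun y => ginv g y i k) x := fun i k =>
    diffAt_inv_entry' hgx hdet i k
  have hαd : ∀ i, DifferentiableAt ℝ (fun y => α y i) x := fun i =>
    ((hα i).contDiffAt (hU.mem_nhds hx)).differentiableAt (by simp)
  have hβd : ∀ i, DifferentiableAt ℝ (fun y => β y i) x := fun i =>
    ((hβ i).contDiffAt (hU.mem_nhds hx)).differentiableAt (by simp)
  have hsα : ∀ k, DifferentiableAt ℝ (fun y => sharp g α y k) x := fun k => by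
    simp only [sharp]
    exact DifferentiableAt.fun_sum fun i _ => (hginv i k).fun_mul (hαd i)
  have hsβ : ∀ k, DifferentiableAt ℝ (fun y => sharp g β y k) x := fun k => by
    simp only [sharp]
    exact DifferentiableAt.fun_sum fun i _ => (hginv i k).fun_mul (hβd i)
  have hXad : ∀ k, DifferentiableAt ℝ (fun y => Xa y k) x := fun k =>
    ((hXa k).contDiffAt (hV.mem_nhds hxV)).differentiableAt (by simp)
  have hXbd : ∀ k, DifferentiableAt ℝ (fun y => Xb y k) x := fun k =>
    ((hXb k).contDiffAt (hV.mem_nhds hxV)).differentiableAt (by simp)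
  -- split the vector-valued fderivs into components
  have hFβ : fderiv ℝ (fun y => (sharp g β y - Xb y : Fin n → ℝ)) x =
      ContinuousLinearMap.pi (fun k => fderiv ℝ (fun y => sharp g β y k - Xb y k) x) :=
    fderiv_pi (fun k => (hsβ k).sub (hXbd k))
  have hFα : fderiv ℝ (fun y => (sharp g α y - Xa y : Fin n → ℝ)) x =
      ContinuousLinearMap.pi (fun k => fderiv ℝ (fun y => sharp g α y k - Xa y k) x) :=
    fderiv_pi (fun k => (hsα k).sub (hXad k))
  funext k
  have h4x : fderiv ℝ (fun y => Xb y k) x (Xa x) - fderiv ℝ (fun y => Xa y k) x (Xb x) = 0 :=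
    congrFun (h4 x hxV) k
  simp only [Pi.sub_apply, hFβ, hFα, ContinuousLinearMap.pi_apply, bracket,
    fderiv_fun_sub (hsβ k) (hXbd k), fderiv_fun_sub (hsα k) (hXad k), ContinuousLinearMap.sub_apply]
  rw [h1a, h1b] at h4x ⊢
  linarith
end
end
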